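/- arXiv:1811.01873 — 13 statements merged into one kernel-verified Lean document; each statement's English description precedes it below -/
import Mathlib

section
/- Let A be a commutative ring, E an A-module, and ⟨a₁, …, aₙ⟩ an E-regular ideal. Then for any p ∈ ℕ, the ideal ⟨a₁^p, …, aₙ^p⟩ is E-regular. -/
lemma aux_span_kill {A : Type*} [CommRing A] {E : Type*} [AddCommGroup E] [Module A E]
    (S : Set A) (x : E) (h : ∀ a ∈ S, a • x = 0) :
    ∀ y ∈ Ideal.span S, y • x = 0 := by
  intro y hy
  induction hy using Submodule.span_induction with
  | mem a ha => exact h a ha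
  | zero => simp
  | add a b _ _ ha hb => rw [add_smul, ha, hb, add_zero]
  | smul c a _ ha => rw [smul_eq_mul, mul_smul, ha, smul_zero]

/-- If the ideal `⟨a₁, …, aₙ⟩` is `E`-regular then so is `⟨a₁^p, …, aₙ^p⟩`. -/
theorem stmt1 {A : Type*} [CommRing A] {E : Type*} [AddCommGroup E] [Module A E]
    {n : ℕ} (a : Fin n → A) (p : ℕ)
    (hI : ∀ x : E, (∀ y ∈ Ideal.span (Set.range a), y • x = 0) → x = 0) :
    ∀ x : E, (∀ y ∈ Ideal.span (Set.range fun i => a i ^ p), y • x = 0) → x = 0 := by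
  have key : ∀ N (m : Fin n → ℕ) (x : E), (∑ i, m i) ≤ N →
      (∀ i, a i ^ m i • x = 0) → x = 0 := by
    intro N
    induction N with
    | zero =>
      intro m x hle h
      rcases Nat.eq_zero_or_pos n with hn | hn
      · apply hI x
        intro y hy
        subst hn
        rw [Set.range_eq_empty a, Ideal.span_empty] at hy
        simp [Ideal.mem_bot.mp hy]
      · have i : Fin n := ⟨0, hn⟩
        have hm : m i = 0 := by
          have : m i ≤ ∑ j, m j := Finset.single_le_sum (fun _ _ => Nat.zero_le _)
            (Finset.mem_univ i)
          omega
        have := h i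
        rwa [hm, pow_zero, one_smul] at this
    | succ N ih =>
      intro m x hle h
      apply hI x
      apply aux_span_kill
      rintro _ ⟨i, rfl⟩
      rcases Nat.eq_zero_or_pos (m i) with hm | hm
      · have := h i
        rw [hm, pow_zero, one_smul] at this
        rw [this, smul_zero]
      · obtain ⟨k, hk⟩ : ∃ k, m i = k + 1 := ⟨m i - 1, by omega⟩
        apply ih (Function.update m i k) (a i • x)
        · rw [Finset.sum_update_of_mem (Finset.mem_univ i), Finset.sdiff_singleton_eq_erase]
          rw [← Finset.add_sum_erase _ m (Finset.mem_univ i)] at hle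
          omega
        · intro j
          rcases eq_or_ne j i with rfl | hji
          · rw [Function.update_self, ← mul_smul, ← pow_succ, ← hk]
            exact h j
          · rw [Function.update_of_ne hji, smul_comm, h j, smul_zero]
  intro x hx
  exact key (∑ _i : Fin n, p) (fun _ => p) x le_rfl
    (fun i => hx _ (Ideal.subset_span ⟨i, rfl⟩))
end

section
/- Let A be a commutative ring, E an A-module, and a₁, …, aₙ elements of A generating an E-regular ideal. For x ∈ E, one has x = 0 if and only if the image of x is zero in each localization E[1/aᵢ]. -/
/-- If `⟨a₁,…,aₙ⟩` is `E`-regular, then `x = 0` iff `x` vanishes in each localization `E[1/aᵢ]`. -/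
theorem stmt2 {A : Type*} [CommRing A] {E : Type*} [AddCommGroup E] [Module A E]
    {n : ℕ} (a : Fin n → A)
    (hI : ∀ x : E, (∀ y ∈ Ideal.span (Set.range a), y • x = 0) → x = 0) (x : E) :
    x = 0 ↔ ∀ i, LocalizedModule.mkLinearMap (Submonoid.powers (a i)) E x = 0 := by
  constructor
  · rintro rfl i; simp
  · intro h
    -- powers of the ideal are also E-regular
    have hIk : ∀ k : ℕ, ∀ z : E,
        (∀ y ∈ (Ideal.span (Set.range a)) ^ (k + 1), y • z = 0) → z = 0 := by
      intro k
      induction k with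
      | zero => simpa using hI
      | succ k ih =>
        intro z hz
        apply hI z
        intro y hy
        apply ih
        intro w hw
        rw [smul_smul]
        apply hz
        rw [pow_succ]
        exact Ideal.mul_mem_mul hw hy
    set J : Ideal A := (Submodule.span A {x}).annihilator with hJ
    have hrad : Ideal.span (Set.range a) ≤ J.radical := by
      rw [Ideal.span_le]
      rintro _ ⟨i, rfl⟩
      have hi := h i
      rw [LocalizedModule.mkLinearMap_apply] at hi
      rw [show (0 : LocalizedModule (Submonoid.powers (a i)) E)
        = LocalizedModule.mk 0 1 from (LocalizedModule.zero_mk 1).symm,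
        LocalizedModule.mk_eq] at hi
      obtain ⟨u, hu⟩ := hi
      simp only [one_smul, smul_zero] at hu
      obtain ⟨c, hc⟩ := u.2
      refine ⟨c, ?_⟩
      rw [Submodule.mem_annihilator_span_singleton]
      simpa [Submonoid.smul_def, hc] using hu
    obtain ⟨M, hM⟩ := Ideal.exists_pow_le_of_le_radical_of_fg hrad
      (Submodule.fg_span (Set.finite_range a))
    apply hIk M
    intro y hy
    have : y ∈ J := hM (Ideal.pow_le_pow_right (Nat.le_succ M) hy)
    rwa [hJ, Submodule.mem_annihilator_span_singleton] at this
end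

section
/- (McCoy's theorem) A matrix M ∈ A^{m×n} over a commutative ring A defines an injective linear map Aⁿ → Aᵐ if and only if the determinantal ideal D_n(M), generated by the n×n minors of M, is a faithful ideal (has zero annihilator). -/
open Matrix Finset

private lemma snoc_inj' {k N : ℕ} {r : Fin k → Fin N} (hr : Function.Injective r)
    {i : Fin N} (hi : ∀ a, r a ≠ i) : Function.Injective (Fin.snoc r i) := by
  intro a b hab
  induction a using Fin.lastCases with
  | last =>
    induction b using Fin.lastCases with
    | last => rfl
    | cast b' =>
      rw [Fin.snoc_last, Fin.snoc_castSucc] at hab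
      exact absurd hab.symm (hi b')
  | cast a' =>
    induction b using Fin.lastCases with
    | last =>
      rw [Fin.snoc_last, Fin.snoc_castSucc] at hab
      exact absurd hab (hi a')
    | cast b' =>
      rw [Fin.snoc_castSucc, Fin.snoc_castSucc] at hab
      exact congrArg Fin.castSucc (hr hab)

private lemma ann_span' {A : Type*} [CommRing A] {S : Set A} {x : A}
    (h : ∀ d ∈ S, d * x = 0) : ∀ y ∈ Ideal.span S, y * x = 0 := by
  intro y hy
  induction hy using Submodule.span_induction with
  | mem d hd => exact h d hd
  | zero => simp
  | add a b _ _ ha hb => rw [add_mul, ha, hb, add_zero]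
  | smul a b _ hb => rw [smul_eq_mul, mul_assoc, hb, mul_zero]

/-- McCoy's theorem: a matrix `M ∈ A^{m×n}` is injective as a linear map `Aⁿ → Aᵐ`
iff the ideal of its `n × n` minors is faithful. -/
theorem stmt3 {A : Type*} [CommRing A] {m n : ℕ} (M : Matrix (Fin m) (Fin n) A) :
    Function.Injective M.mulVecLin ↔
      ∀ x : A,
        (∀ y ∈ Ideal.span {d : A | ∃ r : Fin n → Fin m, Function.Injective r ∧
            d = (M.submatrix r id).det}, y * x = 0) → x = 0 := by
  classical
  constructor
  · -- injective → faithful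
    intro hinj x hx
    by_contra hx0
    set P : ℕ → Prop := fun k => ∃ (r : Fin k → Fin m) (c : Fin k → Fin n),
      Function.Injective r ∧ Function.Injective c ∧ (M.submatrix r c).det * x ≠ 0 with hPdef
    have hP0 : P 0 := ⟨Fin.elim0, Fin.elim0, fun a => a.elim0, fun a => a.elim0, by
      simpa using hx0⟩
    have hPlt : ∀ k, P k → k < n := by
      rintro k ⟨r, c, hr, hc, hd⟩
      have hkn : k ≤ n := by simpa using Fintype.card_le_of_injective c hc
      rcases lt_or_eq_of_le hkn with h | rfl
      · exact h
      · exfalso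
        have hcb : Function.Bijective c := Finite.injective_iff_bijective.mp hc
        let e : Equiv.Perm (Fin k) := Equiv.ofBijective c hcb
        have hsub : M.submatrix r c = (M.submatrix r id).submatrix id e := rfl
        have hmem : (M.submatrix r id).det ∈ Ideal.span {d : A | ∃ r : Fin k → Fin m,
            Function.Injective r ∧ d = (M.submatrix r id).det} :=
          Ideal.subset_span ⟨r, hr, rfl⟩
        have h0 : (M.submatrix r id).det * x = 0 := hx _ hmem
        exact hd (by rw [hsub, Matrix.det_permute', mul_assoc, h0, mul_zero])
    set t := Nat.findGreatest P n with htdef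
    have ht : P t := Nat.findGreatest_spec (Nat.zero_le n) hP0
    have htn : t < n := hPlt t ht
    have hmax : ¬ P (t + 1) :=
      Nat.findGreatest_is_greatest (Nat.lt_succ_self t) htn
    obtain ⟨r, c, hr, hc, hd⟩ := ht
    obtain ⟨j₀, hj₀⟩ : ∃ j₀, ∀ k, c k ≠ j₀ := by
      by_contra hcon
      push_neg at hcon
      have : n ≤ t := by simpa using Fintype.card_le_of_surjective c hcon
      exact absurd this htn.not_ge
    set c' : Fin (t + 1) → Fin n := Fin.snoc c j₀ with hc'def
    have hc' : Function.Injective c' := by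
      refine snoc_inj' hc (fun a h => hj₀ a h)
    set w : Fin (t + 1) → A :=
      fun k => (-1 : A) ^ (t + (k : ℕ)) * (M.submatrix r (c' ∘ k.succAbove)).det * x with hwdef
    have key : ∀ i : Fin m,
        ∑ k : Fin (t + 1), M i (c' k) * w k = (M.submatrix (Fin.snoc r i) c').det * x := by
      intro i
      rw [Matrix.det_succ_row (M.submatrix (Fin.snoc r i) c') (Fin.last t), Finset.sum_mul]
      refine Finset.sum_congr rfl fun k _ => ?_
      have hrow : (Fin.snoc r i : Fin (t+1) → Fin m) ∘ (Fin.last t).succAbove = r := by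
        funext a
        simp [Fin.succAbove_last]
      have hsub : (M.submatrix (Fin.snoc r i) c').submatrix (Fin.last t).succAbove
          k.succAbove = M.submatrix r (c' ∘ k.succAbove) := by
        rw [Matrix.submatrix_submatrix, hrow]
      rw [hsub]
      simp only [hwdef, Matrix.submatrix_apply, Fin.snoc_last, Fin.val_last]
      ring
    have detBx : ∀ i : Fin m, (M.submatrix (Fin.snoc r i) c').det * x = 0 := by
      intro i
      by_cases hi : ∃ k, r k = i
      · obtain ⟨k0, hk0⟩ := hi
        have hne : (Fin.castSucc k0 : Fin (t+1)) ≠ Fin.last t := Fin.castSucc_lt_last k0 |>.ne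
        have hrows : ∀ j, (M.submatrix (Fin.snoc r i) c') (Fin.castSucc k0) j =
            (M.submatrix (Fin.snoc r i) c') (Fin.last t) j := by
          intro j
          simp [Matrix.submatrix_apply, Fin.snoc_castSucc, Fin.snoc_last, hk0]
        rw [Matrix.det_zero_of_row_eq hne (funext hrows), zero_mul]
      · push_neg at hi
        by_contra hne
        exact hmax ⟨Fin.snoc r i, c', snoc_inj' hr hi, hc', hne⟩
    set V : Fin n → A := fun j => ∑ k : Fin (t + 1), if j = c' k then w k else 0 with hVdef
    have hMV : M.mulVecLin V = 0 := by
      funext i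
      show (M.mulVec V) i = 0
      have : (M.mulVec V) i = ∑ k : Fin (t+1), M i (c' k) * w k := by
        simp only [Matrix.mulVec, dotProduct, hVdef, Finset.mul_sum, mul_ite, mul_zero]
        rw [Finset.sum_comm]
        refine Finset.sum_congr rfl fun k _ => ?_
        simp [Finset.sum_ite_eq' Finset.univ (c' k)]
      rw [this, key i, detBx i]
    have hVj : V j₀ = (M.submatrix r c).det * x := by
      have : V j₀ = w (Fin.last t) := by
        show (∑ k : Fin (t+1), if j₀ = c' k then w k else 0) = w (Fin.last t)
        rw [Finset.sum_eq_single (Fin.last t)]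
        · simp [hc'def, Fin.snoc_last]
        · intro k _ hk
          rw [if_neg]
          intro hjk
          exact hk (hc' (by rw [← hjk, hc'def, Fin.snoc_last]))
        · intro h; exact absurd (Finset.mem_univ _) h
      rw [this, hwdef]
      have hcol : c' ∘ (Fin.last t).succAbove = c := by
        funext a
        simp [hc'def, Fin.succAbove_last]
      simp only [Fin.val_last, hcol]
      rw [Even.neg_one_pow ⟨t, rfl⟩, one_mul]
    have hV : V = 0 := hinj (by rw [hMV, map_zero])
    rw [hV] at hVj
    exact hd hVj.symm
  · -- faithful → injective
    intro h
    rw [injective_iff_map_eq_zero]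
    intro v hv
    funext j
    refine h (v j) (ann_span' ?_)
    rintro d ⟨r, hr, rfl⟩
    set N := M.submatrix r id with hN
    have hNv : N.mulVec v = 0 := by
      funext i
      have : N.mulVec v i = M.mulVec v (r i) := rfl
      rw [this]
      have : M.mulVec v = 0 := hv
      rw [this]
      rfl
    have : N.det • v = 0 := by
      have h1 : (N.adjugate * N).mulVec v = N.det • v := by
        rw [Matrix.adjugate_mul, Matrix.smul_mulVec, Matrix.one_mulVec]
      rw [← h1, ← Matrix.mulVec_mulVec, hNv, Matrix.mulVec_zero]
    have := congrFun this j
    simpa using this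
end

section
/- (McCoy's lemma) Let A be a commutative ring, E an A-module, and f ∈ A[X₁,…,Xₖ] a polynomial. Then f is a regular element for the module E[X₁,…,Xₖ] (i.e. f·g = 0 implies g = 0 for g ∈ E[X₁,…,Xₖ]) if and only if the content ideal c(f) generated by the coefficients of f is E-regular. -/
/-!
Fix a monomial order and suppose `f • g = 0` with `g ≠ 0` of least possible leading exponent `e`.
As the content of `f` is `E`-regular, some coefficient of `f` does not kill `g`; let `a` be the one
with the largest exponent `c`. The coefficient of `f • g` at `c + e` is then `a • gₑ`, so `a • g` is
a nonzero element annihilated by `f` whose leading exponent is smaller than `e`.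
-/

open scoped MonomialOrder

namespace MvPolynomial

open Finset TensorProduct

variable {R σ : Type*} [CommSemiring R]

theorem exists_max_coeff_smul_ne_zero {M : Type*} [AddCommMonoid M] [Module R M]
    (m : MonomialOrder σ) {f : MvPolynomial σ R} {x : M} (h : ∃ d, coeff d f • x ≠ 0) :
    ∃ c, coeff c f • x ≠ 0 ∧ ∀ d, c ≺[m] d → coeff d f • x = 0 := by
  classical
  have mem_filter_of_ne {d} (hd : coeff d f • x ≠ 0) :
      d ∈ f.support.filter fun d => coeff d f • x ≠ 0 :=
    mem_filter.mpr ⟨mem_support_iff.mpr (left_ne_zero_of_smul hd), hd⟩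
  obtain ⟨c, hc, hmax⟩ := exists_max_image _ m.toSyn (h.elim fun d hd => ⟨d, mem_filter_of_ne hd⟩)
  exact ⟨c, (mem_filter.mp hc).2, fun d hd =>
    by_contra fun h => (hmax d (mem_filter_of_ne h)).not_gt hd⟩

section scalarRTensor

variable {N : Type*} [AddCommMonoid N] [Module R N] [DecidableEq σ]

noncomputable def scalarRTensor : MvPolynomial σ R ⊗[R] N ≃ₗ[R] (σ →₀ ℕ) →₀ N :=
  TensorProduct.congr (AddMonoidAlgebra.coeffLinearEquiv R) (LinearEquiv.refl R N) ≪≫ₗ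
    TensorProduct.finsuppScalarLeft R N (σ →₀ ℕ)

theorem scalarRTensor_tmul_apply (p : MvPolynomial σ R) (n : N) (d : σ →₀ ℕ) :
    scalarRTensor (p ⊗ₜ[R] n) d = coeff d p • n :=
  finsuppScalarLeft_apply_tmul_apply _ _ _

theorem tmul_eq_zero_iff_forall_coeff_smul_eq_zero {p : MvPolynomial σ R} {n : N} :
    p ⊗ₜ[R] n = 0 ↔ ∀ d, coeff d p • n = 0 := by
  rw [← scalarRTensor.map_eq_zero_iff, Finsupp.ext_iff]
  simp only [scalarRTensor_tmul_apply, Finsupp.coe_zero, Pi.zero_apply]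

theorem one_tmul_eq_zero_iff {n : N} : (1 : MvPolynomial σ R) ⊗ₜ[R] n = 0 ↔ n = 0 := by
  refine ⟨fun h => ?_, fun h => h ▸ tmul_zero _ _⟩
  simpa using tmul_eq_zero_iff_forall_coeff_smul_eq_zero.mp h 0

theorem scalarRTensor_smul_apply (f : MvPolynomial σ R) (t : MvPolynomial σ R ⊗[R] N)
    (d : σ →₀ ℕ) :
    scalarRTensor (f • t) d =
      ∑ p ∈ antidiagonal d, coeff p.1 f • scalarRTensor t p.2 := by
  induction t using TensorProduct.induction_on with
  | zero => simp
  | tmul p n =>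
    simp only [smul_tmul', smul_eq_mul, scalarRTensor_tmul_apply, coeff_mul, sum_smul,
      mul_smul]
  | add t t' ht ht' =>
    simp only [smul_add, map_add, Finsupp.add_apply, ht, ht', smul_add, sum_add_distrib]

theorem scalarRTensor_smul_apply_add_of_le (m : MonomialOrder σ) {f : MvPolynomial σ R}
    {t : MvPolynomial σ R ⊗[R] N} {a b : σ →₀ ℕ} (hf : ∀ d, a ≺[m] d → coeff d f • t = 0)
    (ht : ∀ d, b ≺[m] d → scalarRTensor t d = 0) :
    scalarRTensor (f • t) (a + b) = coeff a f • scalarRTensor t b := by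
  rw [scalarRTensor_smul_apply, sum_eq_single (a, b) _ (by simp)]
  rintro ⟨c, e⟩ hce hne
  rw [HasAntidiagonal.mem_antidiagonal] at hce
  by_cases hc : a ≺[m] c
  · rw [← Finsupp.smul_apply, ← map_smul, hf c hc, map_zero, Finsupp.coe_zero, Pi.zero_apply]
  by_cases he : b ≺[m] e
  · rw [ht e he, smul_zero]
  have hsum : m.toSyn c + m.toSyn e = m.toSyn a + m.toSyn b := by
    rw [← map_add, ← map_add, hce]
  obtain ⟨rfl, rfl⟩ := (add_eq_add_iff_eq_and_eq (not_lt.mp hc) (not_lt.mp he)).mp hsum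
    |>.imp (m.toSyn.injective ·) (m.toSyn.injective ·)
  exact absurd rfl hne

theorem eq_zero_of_smul_eq_zero (m : MonomialOrder σ) {f : MvPolynomial σ R}
    (hf : ∀ n : N, (∀ d, coeff d f • n = 0) → n = 0) {t : MvPolynomial σ R ⊗[R] N}
    (hft : f • t = 0) : t = 0 := by
  induction hb : (scalarRTensor t).support.sup m.toSyn using WellFoundedLT.induction
    generalizing t with
  | ind b IH =>
  by_contra ht
  obtain ⟨e, he, hbe⟩ := (scalarRTensor t).support.exists_mem_eq_sup
    (Finsupp.support_nonempty_iff.mpr (scalarRTensor.map_ne_zero_iff.mpr ht)) m.toSyn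
  have ht_le : ∀ d, e ≺[m] d → scalarRTensor t d = 0 := fun d hd =>
    Finsupp.notMem_support_iff.mp fun hd' => (hbe ▸ le_sup hd').not_gt hd
  obtain ⟨c, hc, hc_max⟩ := exists_max_coeff_smul_ne_zero m (f := f) (x := t) <| by
    by_contra! h
    refine Finsupp.mem_support_iff.mp he (hf _ fun d => ?_)
    rw [← Finsupp.smul_apply, ← map_smul, h d, map_zero, Finsupp.coe_zero, Pi.zero_apply]
  have htop : coeff c f • scalarRTensor t e = 0 := by
    rw [← scalarRTensor_smul_apply_add_of_le m hc_max ht_le, hft, map_zero, Finsupp.coe_zero,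
      Pi.zero_apply]
  refine hc (IH _ ?_ (by rw [smul_comm, hft, smul_zero]) rfl)
  obtain ⟨e', he', hbe'⟩ := (scalarRTensor (coeff c f • t)).support.exists_mem_eq_sup
    (Finsupp.support_nonempty_iff.mpr (scalarRTensor.map_ne_zero_iff.mpr hc)) m.toSyn
  rw [hbe', ← hb, hbe]
  rw [Finsupp.mem_support_iff, map_smul, Finsupp.smul_apply] at he'
  have he'_le : m.toSyn e' ≤ m.toSyn e :=
    hbe ▸ le_sup (Finsupp.mem_support_iff.mpr (right_ne_zero_of_smul he'))
  exact he'_le.lt_of_ne fun h => he' (m.toSyn.injective h ▸ htop)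

end scalarRTensor

end MvPolynomial

theorem Ideal.forall_mem_span_smul_eq_zero_iff {A E : Type*} [CommSemiring A] [AddCommMonoid E]
    [Module A E] {s : Set A} {x : E} :
    (∀ y ∈ Ideal.span s, y • x = 0) ↔ ∀ y ∈ s, y • x = 0 := by
  simp_rw [← Submodule.mem_annihilator_span_singleton]
  exact Ideal.span_le

open TensorProduct in
/-- McCoy's lemma: `f ∈ A[X₁,…,Xₖ]` is a regular element for `E[X₁,…,Xₖ]`
(realized as `A[X₁,…,Xₖ] ⊗[A] E`) iff its content ideal is `E`-regular. -/
theorem stmt4 {A : Type*} [CommRing A] {E : Type*} [AddCommGroup E] [Module A E]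
    {k : ℕ} (f : MvPolynomial (Fin k) A) :
    (∀ g : MvPolynomial (Fin k) A ⊗[A] E, f • g = 0 → g = 0) ↔
      (∀ x : E,
        (∀ y ∈ Ideal.span (Set.range fun m => MvPolynomial.coeff m f), y • x = 0) → x = 0) := by
  simp only [Ideal.forall_mem_span_smul_eq_zero_iff, Set.forall_mem_range]
  refine ⟨fun hf x hx => MvPolynomial.one_tmul_eq_zero_iff.mp (hf _ ?_),
    fun hf _ => MvPolynomial.eq_zero_of_smul_eq_zero MonomialOrder.lex hf⟩
  rwa [smul_tmul', smul_eq_mul, mul_one,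
    MvPolynomial.tmul_eq_zero_iff_forall_coeff_smul_eq_zero]
end

section
/- Let E be an A-module and (a₁, …, aₙ) an E-regular sequence in a commutative ring A. Then each aᵢ is E-regular modulo the submodule generated by the aⱼE with j ≠ i; that is, if Σⱼ aⱼxⱼ = 0 with xⱼ ∈ E, then xᵢ ∈ Σ_{j≠i} aⱼE. -/
/-!
Induction on the length. From `∑ aⱼ xⱼ = 0` we get `aₙ xₙ ∈ (a₁, …, aₙ₋₁) E`, so regularity of
`aₙ` gives `xₙ = ∑_{j<n} aⱼ yⱼ`. Substituting yields the syzygy `∑_{j<n} aⱼ (xⱼ + aₙ yⱼ) = 0` of the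
regular sequence `a₁, …, aₙ₋₁`, and the induction hypothesis applied to it gives the claim for `i < n`.
-/

section

open Submodule

variable {A : Type*} [CommRing A] {E : Type*} [AddCommGroup E] [Module A E]

theorem mem_ideal_span_range_smul_top_iff {ι : Type*} [Fintype ι] (a : ι → A) (x : E) :
    x ∈ Ideal.span (Set.range a) • (⊤ : Submodule A E) ↔ ∃ y : ι → E, ∑ j, a j • y j = x := by
  constructor
  · intro hx
    rw [← Set.iUnion_singleton_eq_range, Ideal.span_iUnion, iSup_smul] at hx
    simp_rw [ideal_span_singleton_smul] at hx
    obtain ⟨μ, rfl⟩ := (mem_iSup_finset_iff_exists_sum (s := .univ) _ x).1 (by simpa using hx)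
    choose y hy using fun j => (mem_smul_pointwise_iff_exists _ _ _).1 (μ j).2
    exact ⟨y, by simp only [hy]⟩
  · rintro ⟨y, rfl⟩
    exact sum_mem fun j _ => smul_mem_smul (Ideal.subset_span ⟨j, rfl⟩) mem_top

theorem Fin.image_setOf_lt_last {α : Type*} {n : ℕ} (a : Fin (n + 1) → α) :
    a '' {j | j < Fin.last n} = Set.range (a ∘ Fin.castSucc) := by
  rw [Set.range_comp, Fin.range_castSucc]
  rfl

theorem Fin.image_setOf_lt_castSucc {α : Type*} {n : ℕ} (a : Fin (n + 1) → α) (i : Fin n) :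
    a '' {j | j < i.castSucc} = (a ∘ Fin.castSucc) '' {j | j < i} := by
  rw [Set.image_comp]
  exact congrArg _ (Fin.image_castSucc_Iio i).symm

variable (E) in
/-- `RingTheory.Sequence.IsWeaklyRegular E`, for a `Fin n`-indexed family. -/
def IsWeaklyRegularFamily {n : ℕ} (a : Fin n → A) : Prop :=
  ∀ i x, a i • x ∈ Ideal.span (a '' {j | j < i}) • (⊤ : Submodule A E) →
    x ∈ Ideal.span (a '' {j | j < i}) • (⊤ : Submodule A E)

namespace IsWeaklyRegularFamily

variable {n : ℕ}

theorem castSucc {a : Fin (n + 1) → A} (h : IsWeaklyRegularFamily E a) :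
    IsWeaklyRegularFamily E (a ∘ Fin.castSucc) := by
  intro i x
  rw [← Fin.image_setOf_lt_castSucc]
  exact h i.castSucc x

theorem last_mem_of_sum_smul_eq_zero {a : Fin (n + 1) → A} (h : IsWeaklyRegularFamily E a)
    {x : Fin (n + 1) → E} (hx : ∑ j, a j • x j = 0) :
    x (Fin.last n) ∈ Ideal.span (Set.range (a ∘ Fin.castSucc)) • (⊤ : Submodule A E) := by
  rw [← Fin.image_setOf_lt_last]
  apply h (Fin.last n)
  rw [Fin.sum_univ_castSucc] at hx
  rw [eq_neg_of_add_eq_zero_right hx, Fin.image_setOf_lt_last]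
  exact neg_mem ((mem_ideal_span_range_smul_top_iff _ _).2 ⟨_, rfl⟩)

theorem mem_of_sum_smul_eq_zero {a : Fin n → A} (h : IsWeaklyRegularFamily E a)
    {x : Fin n → E} (hx : ∑ j, a j • x j = 0) (i : Fin n) :
    x i ∈ Ideal.span (a '' {j | j ≠ i}) • (⊤ : Submodule A E) := by
  induction n with
  | zero => exact i.elim0
  | succ n ih =>
    have hlast := h.last_mem_of_sum_smul_eq_zero hx
    obtain ⟨y, hy⟩ := (mem_ideal_span_range_smul_top_iff _ _).1 hlast
    rcases Fin.eq_castSucc_or_eq_last i with ⟨i, rfl⟩ | rfl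
    · have hsyzygy : ∑ j, (a ∘ Fin.castSucc) j • (x j.castSucc + a (Fin.last n) • y j) = 0 := by
        rw [Fin.sum_univ_castSucc, ← hy] at hx
        simpa only [Function.comp_apply, smul_add, Finset.sum_add_distrib, Finset.smul_sum,
          smul_comm (a (Fin.last n))] using hx
      have hsub : (a ∘ Fin.castSucc) '' {j | j ≠ i} ⊆ a '' {j | j ≠ i.castSucc} := by
        rintro _ ⟨j, hj, rfl⟩
        exact ⟨_, (Fin.castSucc_injective n).ne hj, rfl⟩
      rw [← add_sub_cancel_right (x i.castSucc) (a (Fin.last n) • y i)]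
      exact sub_mem (smul_mono_left (Ideal.span_mono hsub) (ih h.castSucc hsyzygy i))
        (smul_mem_smul (Ideal.subset_span ⟨_, (Fin.castSucc_lt_last i).ne', rfl⟩) mem_top)
    · refine smul_mono_left (Ideal.span_mono ?_) hlast
      rintro _ ⟨j, rfl⟩
      exact ⟨_, Fin.castSucc_ne_last j, rfl⟩

end IsWeaklyRegularFamily

end

/-- If `(a₁, …, aₙ)` is an `E`-regular sequence, then each `aᵢ` is `E`-regular modulo
the submodule generated by the `aⱼ E`, `j ≠ i`: any syzygy `∑ aⱼ xⱼ = 0` forces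
`xᵢ ∈ ∑_{j ≠ i} aⱼ E`. -/
theorem stmt5 {A : Type*} [CommRing A] {E : Type*} [AddCommGroup E] [Module A E]
    {n : ℕ} (a : Fin n → A)
    (hreg : ∀ i : Fin n, ∀ x : E,
      a i • x ∈ Ideal.span (a '' {j | j < i}) • (⊤ : Submodule A E) →
      x ∈ Ideal.span (a '' {j | j < i}) • (⊤ : Submodule A E))
    (i : Fin n) (x : Fin n → E) (hx : ∑ j, a j • x j = 0) :
    x i ∈ Ideal.span (a '' {j | j ≠ i}) • (⊤ : Submodule A E) :=
  IsWeaklyRegularFamily.mem_of_sum_smul_eq_zero hreg hx i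
end

section
/- Let E, F, G, H be A-modules with an exact sequence E → F → G → H, and let a ∈ A be an H-regular element. Then the induced sequence E/aE → F/aF → G/aG is exact. -/
lemma aux_mem_span_smul {A M : Type*} [CommRing A] [AddCommGroup M] [Module A M]
    (a : A) (x : M) : x ∈ Ideal.span {a} • (⊤ : Submodule A M) ↔ ∃ m : M, a • m = x := by
  constructor
  · intro h
    refine Submodule.smul_induction_on h ?_ ?_
    · rintro r hr n -
      rcases Ideal.mem_span_singleton'.mp hr with ⟨c, rfl⟩
      exact ⟨c • n, by rw [smul_smul, mul_comm, mul_smul]⟩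
    · rintro x y ⟨m, rfl⟩ ⟨n, rfl⟩
      exact ⟨m + n, smul_add a m n⟩
  · rintro ⟨m, rfl⟩
    exact Submodule.smul_mem_smul (Ideal.subset_span rfl) Submodule.mem_top

/-- If `E → F → G → H` is exact and `a` is `H`-regular, then the induced sequence
`E/aE → F/aF → G/aG` is exact. -/
theorem stmt6 {A : Type*} [CommRing A]
    {E F G H : Type*} [AddCommGroup E] [Module A E] [AddCommGroup F] [Module A F]
    [AddCommGroup G] [Module A G] [AddCommGroup H] [Module A H]
    (φ : E →ₗ[A] F) (ψ : F →ₗ[A] G) (η : G →ₗ[A] H)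
    (h1 : Function.Exact φ ψ) (h2 : Function.Exact ψ η)
    (a : A) (ha : ∀ z : H, a • z = 0 → z = 0) :
    ∀ y : F, ψ y ∈ Ideal.span {a} • (⊤ : Submodule A G) ↔
      ∃ x : E, y - φ x ∈ Ideal.span {a} • (⊤ : Submodule A F) := by
  intro y
  rw [aux_mem_span_smul]
  constructor
  · rintro ⟨g, hg⟩
    have hηg : η g = 0 := by
      apply ha
      rw [← map_smul, hg, ← h2.apply_apply_eq_zero y]
    rcases (h2 g).mp hηg with ⟨f, hf⟩
    have hψ : ψ (y - a • f) = 0 := by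
      simp [map_sub, map_smul, hf, hg]
    rcases (h1 _).mp hψ with ⟨x, hx⟩
    refine ⟨x, (aux_mem_span_smul a _).mpr ⟨f, ?_⟩⟩
    rw [hx]; abel
  · rintro ⟨x, hx⟩
    rcases (aux_mem_span_smul a _).mp hx with ⟨f, hf⟩
    refine ⟨ψ f, ?_⟩
    have := congrArg ψ hf
    simp only [map_smul, map_sub, h1.apply_apply_eq_zero, sub_zero] at this
    exact this
end

section
/- (Characterization of depth ≥ 2) Let a₁, …, aₙ generate an E-regular ideal 𝔞 of a commutative ring A, where E is an A-module. Then the following are equivalent: (1) 𝔞 remains E[X₁,…,Xₙ]/fE[X₁,…,Xₙ]-regular where f = Σᵢ aᵢXᵢ; (2) for every sequence (v₁,…,vₙ) in E with aᵢvⱼ = aⱼvᵢ for all i,j, there exists v ∈ E with vᵢ = aᵢv for all i; moreover such v is then unique. -/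
/-!
Identify `E[X] = A[X] ⊗ E` with the coefficient families `(σ →₀ ℕ) →₀ E`, on which
`f = ∑ aᵢ Xᵢ` acts by shifting. Multiplication by `f` is injective: if `f h = 0` and `μ` is the
lex-largest monomial of `h`, then, once `aₗ h = 0` for all `l < j`, the coefficient of `f h` at
`μ + Xⱼ` is `aⱼ h_μ`, so `aⱼ h` is a kernel element with smaller support, hence zero by
induction; regularity of `𝔞` then forces `h = 0`.

Given (2) and `aᵢ g = f hᵢ`, injectivity of `f` makes `(hᵢ)` proportional, coefficientwise
`hᵢ = aᵢ w`, and `aᵢ (g - f w) = 0` gives `g = f w`. Conversely, for a proportional `(vᵢ)` the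
form `g = ∑ vⱼ Xⱼ` satisfies `aᵢ g = f vᵢ`, so `g = f h`, and the coefficient of `Xᵢ` gives
`vᵢ = aᵢ h₀`.
-/

open TensorProduct MvPolynomial

namespace DepthTwo

variable {A : Type*} [CommRing A] {E : Type*} [AddCommGroup E] [Module A E] {ι σ : Type*}

section Regular

variable {M : Type*} [AddCommGroup M] [Module A M] (a : ι → A)

theorem mem_range_of_forall_smul_mem_range (T : M →ₗ[A] M) (hT : Function.Injective T)
    (hreg : ∀ x : M, (∀ i, a i • x = 0) → x = 0)
    (hprop : ∀ v : ι → M, (∀ i j, a i • v j = a j • v i) → ∃ w, ∀ i, v i = a i • w)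
    (g : M) (hg : ∀ i, a i • g ∈ LinearMap.range T) : g ∈ LinearMap.range T := by
  choose h hh using hg
  obtain ⟨w, hw⟩ : ∃ w, ∀ i, h i = a i • w := by
    refine hprop h fun i j => hT ?_
    rw [map_smul, map_smul, hh, hh, smul_smul, smul_smul, mul_comm]
  refine ⟨w, (sub_eq_zero.mp (hreg _ fun i => ?_)).symm⟩
  rw [smul_sub, ← map_smul, ← hw, hh, sub_self]

theorem existsUnique_iff_exists (hreg : ∀ x : M, (∀ i, a i • x = 0) → x = 0) (v : ι → M) :
    (∃! w, ∀ i, v i = a i • w) ↔ ∃ w, ∀ i, v i = a i • w := by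
  refine ⟨ExistsUnique.exists, fun ⟨w, hw⟩ => ⟨w, hw, fun w' hw' => ?_⟩⟩
  refine sub_eq_zero.mp (hreg _ fun i => ?_)
  rw [smul_sub, ← hw, ← hw', sub_self]

end Regular

section Finsupp

variable {α : Type*} (a : ι → A)

theorem finsupp_eq_zero_of_forall_smul_eq_zero (hreg : ∀ x : E, (∀ i, a i • x = 0) → x = 0)
    (h : α →₀ E) (hh : ∀ i, a i • h = 0) : h = 0 :=
  Finsupp.ext fun m => hreg _ fun i => by rw [← Finsupp.smul_apply, hh, Finsupp.zero_apply]

theorem finsupp_exists_smul_eq_of_proportional [Fintype ι]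
    (hreg : ∀ x : E, (∀ i, a i • x = 0) → x = 0)
    (hprop : ∀ v : ι → E, (∀ i j, a i • v j = a j • v i) → ∃ w, ∀ i, v i = a i • w)
    (v : ι → α →₀ E) (hv : ∀ i j, a i • v j = a j • v i) : ∃ w, ∀ i, v i = a i • w := by
  classical
  choose w hw using fun m => hprop (fun i => v i m) fun i j => by
    simpa only [Finsupp.smul_apply] using DFunLike.congr_fun (hv i j) m
  have hsupp : ∀ m, w m ≠ 0 → m ∈ Finset.univ.biUnion fun i => (v i).support := by
    intro m hm
    contrapose! hm
    refine hreg _ fun i => ?_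
    rw [← hw m i]
    exact Finsupp.notMem_support_iff.mp fun hi =>
      hm (Finset.mem_biUnion.mpr ⟨i, Finset.mem_univ i, hi⟩)
  exact ⟨Finsupp.onFinset _ w hsupp, fun i => Finsupp.ext fun m => hw m i⟩

end Finsupp

theorem mapDomain_add_right_apply {α M : Type*} [AddCommMonoid M]
    (h : (α →₀ ℕ) →₀ M) (d m : α →₀ ℕ) :
    Finsupp.mapDomain (· + d) h m = if d ≤ m then h (m - d) else 0 := by
  split_ifs with hd
  · conv_lhs => rw [← tsub_add_cancel_of_le hd]
    exact Finsupp.mapDomain_apply (add_left_injective d) h _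
  · refine Finsupp.mapDomain_of_notMem_range _ _ ?_
    rintro ⟨c, rfl⟩
    exact hd le_add_self

theorem toLex_lt_of_add_single_eq [LinearOrder σ] {μ ν : σ →₀ ℕ} {j l : σ} (hjl : j < l)
    (h : ν + Finsupp.single l 1 = μ + Finsupp.single j 1) : toLex μ < toLex ν := by
  classical
  have hcoord := fun k => DFunLike.congr_fun h k
  simp only [Finsupp.add_apply, Finsupp.single_apply] at hcoord
  refine ⟨j, fun k hk => ?_, ?_⟩
  · have := hcoord k
    rw [if_neg hk.ne', if_neg (hk.trans hjl).ne'] at this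
    exact this.symm
  · have := hcoord j
    rw [if_neg hjl.ne', if_pos rfl] at this
    show μ j < ν j
    omega

open Classical in
noncomputable def coeffEquiv : MvPolynomial σ A ⊗[A] E ≃ₗ[A] (σ →₀ ℕ) →₀ E :=
  (LinearEquiv.rTensor E (basisMonomials σ A).repr).trans (finsuppScalarLeft A E (σ →₀ ℕ))

theorem coeffEquiv_symm_single (m : σ →₀ ℕ) (e : E) :
    (coeffEquiv (A := A)).symm (Finsupp.single m e) = monomial m 1 ⊗ₜ e := by
  simp [coeffEquiv]

variable [Fintype σ]

noncomputable def genericFormMul (a : σ → A) : ((σ →₀ ℕ) →₀ E) →ₗ[A] ((σ →₀ ℕ) →₀ E) :=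
  ∑ i, a i • Finsupp.lmapDomain E A (· + Finsupp.single i 1)

variable (a : σ → A)

theorem genericFormMul_apply (h : (σ →₀ ℕ) →₀ E) (m : σ →₀ ℕ) :
    genericFormMul a h m =
      ∑ i, if Finsupp.single i 1 ≤ m then a i • h (m - Finsupp.single i 1) else 0 := by
  simp only [genericFormMul, LinearMap.sum_apply, LinearMap.smul_apply,
    Finsupp.lmapDomain_apply, Finsupp.finsetSum_apply, Finsupp.smul_apply,
    mapDomain_add_right_apply, smul_ite, smul_zero]

theorem genericFormMul_single_zero (x : E) :
    genericFormMul a (Finsupp.single 0 x) = ∑ i, Finsupp.single (Finsupp.single i 1) (a i • x) := by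
  simp only [genericFormMul, LinearMap.sum_apply, LinearMap.smul_apply,
    Finsupp.lmapDomain_apply, Finsupp.mapDomain_single, zero_add, Finsupp.smul_single]

theorem genericFormMul_apply_single (h : (σ →₀ ℕ) →₀ E) (i : σ) :
    genericFormMul a h (Finsupp.single i 1) = a i • h 0 := by
  classical
  rw [genericFormMul_apply, Finset.sum_eq_single i]
  · simp
  · intro l _ hl
    rw [if_neg]
    simpa [Finsupp.single_le_iff, Finsupp.single_apply] using Ne.symm hl
  · simp

theorem coeffEquiv_symm_genericFormMul (h : (σ →₀ ℕ) →₀ E) :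
    (coeffEquiv (A := A)).symm (genericFormMul a h) =
      (∑ i, C (a i) * X i : MvPolynomial σ A) • (coeffEquiv (A := A)).symm h := by
  suffices (coeffEquiv (A := A)).symm.toLinearMap ∘ₗ genericFormMul a =
      (LinearMap.lsmul (MvPolynomial σ A) (MvPolynomial σ A ⊗[A] E)
        (∑ i, C (a i) * X i)).restrictScalars A ∘ₗ (coeffEquiv (A := A)).symm.toLinearMap from
    DFunLike.congr_fun this h
  refine Finsupp.lhom_ext fun m e => ?_
  simp only [LinearMap.comp_apply, LinearMap.restrictScalars_apply, LinearMap.lsmul_apply,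
    LinearEquiv.coe_coe, genericFormMul, LinearMap.sum_apply, LinearMap.smul_apply,
    Finsupp.lmapDomain_apply, Finsupp.mapDomain_single, map_sum, map_smul, coeffEquiv_symm_single,
    smul_tmul']
  refine Finset.sum_congr rfl fun i _ => ?_
  rw [smul_eq_mul, X, C_mul_monomial, monomial_mul, smul_monomial, smul_eq_mul, add_comm]
  simp

theorem genericFormMul_apply_add_single [LinearOrder σ] {h : (σ →₀ ℕ) →₀ E} {μ : σ →₀ ℕ}
    (hμ : ∀ ν ∈ h.support, toLex ν ≤ toLex μ) {j : σ} (hlow : ∀ l < j, a l • h = 0) :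
    genericFormMul a h (μ + Finsupp.single j 1) = a j • h μ := by
  classical
  rw [genericFormMul_apply, Finset.sum_eq_single j]
  · rw [if_pos le_add_self, add_tsub_cancel_right]
  · intro l _ hl
    split_ifs with hle
    · rcases hl.lt_or_gt with hlj | hjl
      · rw [← Finsupp.smul_apply, hlow l hlj, Finsupp.zero_apply]
      · have hlt := toLex_lt_of_add_single_eq hjl (tsub_add_cancel_of_le hle)
        rw [Finsupp.notMem_support_iff.mp fun hmem => (hμ _ hmem).not_gt hlt, smul_zero]
    · rfl
  · simp

variable {a} in
theorem eq_zero_of_genericFormMul_eq_zero [LinearOrder σ]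
    (hreg : ∀ x : E, (∀ i, a i • x = 0) → x = 0) (h : (σ →₀ ℕ) →₀ E)
    (hh : genericFormMul a h = 0) : h = 0 := by
  induction hk : h.support.card using Nat.strong_induction_on generalizing h with
  | _ k IH =>
  obtain hempty | hne := h.support.eq_empty_or_nonempty
  · exact Finsupp.support_eq_empty.mp hempty
  obtain ⟨μ, hμ, hmax⟩ := h.support.exists_max_image toLex hne
  refine finsupp_eq_zero_of_forall_smul_eq_zero a hreg h fun j => ?_
  induction j using WellFoundedLT.induction with
  | _ j IHj =>
  have hμj : (a j • h) μ = 0 := by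
    rw [Finsupp.smul_apply, ← genericFormMul_apply_add_single a hmax IHj, hh, Finsupp.zero_apply]
  have hsub : (a j • h).support ⊂ h.support :=
    Finset.ssubset_iff_subset_ne.mpr ⟨Finsupp.support_smul,
      fun heq => Finsupp.mem_support_iff.mp (heq ▸ hμ) hμj⟩
  exact IH _ (hk ▸ Finset.card_lt_card hsub) _ (by rw [map_smul, hh, smul_zero]) rfl

variable {a} in
theorem genericFormMul_injective (hreg : ∀ x : E, (∀ i, a i • x = 0) → x = 0) :
    Function.Injective (genericFormMul (E := E) a) := by
  classical
  have : LinearOrder σ := linearOrderOfSTO WellOrderingRel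
  exact (injective_iff_map_eq_zero _).mpr (eq_zero_of_genericFormMul_eq_zero hreg)

theorem exists_smul_eq_of_forall_mem_range
    (H : ∀ g : (σ →₀ ℕ) →₀ E, (∀ i, a i • g ∈ LinearMap.range (genericFormMul a)) →
      g ∈ LinearMap.range (genericFormMul a))
    (v : σ → E) (hv : ∀ i j, a i • v j = a j • v i) : ∃ w, ∀ i, v i = a i • w := by
  classical
  set g : (σ →₀ ℕ) →₀ E := ∑ j, Finsupp.single (Finsupp.single j 1) (v j)
  have hg : ∀ i, genericFormMul a (Finsupp.single 0 (v i)) = a i • g := fun i => by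
    simp only [g, genericFormMul_single_zero, Finset.smul_sum, Finsupp.smul_single, hv]
  obtain ⟨h, hh⟩ := H g fun i => ⟨_, hg i⟩
  refine ⟨h 0, fun i => ?_⟩
  rw [← genericFormMul_apply_single, hh]
  simp [g, Finsupp.single_apply, Finsupp.single_left_inj one_ne_zero]

theorem forall_mem_range_genericFormMul_iff (hreg : ∀ x : E, (∀ i, a i • x = 0) → x = 0) :
    (∀ g : (σ →₀ ℕ) →₀ E, (∀ i, a i • g ∈ LinearMap.range (genericFormMul a)) →
      g ∈ LinearMap.range (genericFormMul a)) ↔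
      ∀ v : σ → E, (∀ i j, a i • v j = a j • v i) → ∃ w, ∀ i, v i = a i • w :=
  ⟨exists_smul_eq_of_forall_mem_range a, fun H =>
    mem_range_of_forall_smul_mem_range a _ (genericFormMul_injective hreg)
      (finsupp_eq_zero_of_forall_smul_eq_zero a hreg)
      (finsupp_exists_smul_eq_of_proportional a hreg H)⟩

theorem mem_span_smul_top_iff (g : MvPolynomial σ A ⊗[A] E) :
    g ∈ Ideal.span {∑ i, C (a i) * X i} •
        (⊤ : Submodule (MvPolynomial σ A) (MvPolynomial σ A ⊗[A] E)) ↔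
      coeffEquiv g ∈ LinearMap.range (genericFormMul (E := E) a) := by
  rw [Submodule.ideal_span_singleton_smul, Submodule.mem_smul_pointwise_iff_exists]
  constructor
  · rintro ⟨b, -, rfl⟩
    refine ⟨coeffEquiv b, (coeffEquiv (A := A)).symm.injective ?_⟩
    rw [coeffEquiv_symm_genericFormMul, LinearEquiv.symm_apply_apply, LinearEquiv.symm_apply_apply]
  · rintro ⟨h, hh⟩
    refine ⟨coeffEquiv.symm h, Submodule.mem_top, ?_⟩
    rw [← coeffEquiv_symm_genericFormMul, hh, LinearEquiv.symm_apply_apply]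

theorem forall_mem_span_smul_top_iff :
    (∀ g : MvPolynomial σ A ⊗[A] E,
      (∀ i, (C (a i) : MvPolynomial σ A) • g ∈ Ideal.span {∑ i, C (a i) * X i} •
          (⊤ : Submodule (MvPolynomial σ A) (MvPolynomial σ A ⊗[A] E))) →
        g ∈ Ideal.span {∑ i, C (a i) * X i} •
          (⊤ : Submodule (MvPolynomial σ A) (MvPolynomial σ A ⊗[A] E))) ↔
      ∀ h : (σ →₀ ℕ) →₀ E, (∀ i, a i • h ∈ LinearMap.range (genericFormMul a)) →
        h ∈ LinearMap.range (genericFormMul a) := by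
  have hC (c : A) (g : MvPolynomial σ A ⊗[A] E) : (C c : MvPolynomial σ A) • g = c • g :=
    algebraMap_smul (MvPolynomial σ A) c g
  simp only [hC, mem_span_smul_top_iff, map_smul]
  rw [(coeffEquiv (A := A) (E := E) (σ := σ)).surjective.forall]

end DepthTwo

open TensorProduct MvPolynomial in
/-- Characterization of depth ≥ 2: for `𝔞 = ⟨a₁,…,aₙ⟩` an `E`-regular ideal,
`𝔞` is regular on `E[X₁,…,Xₙ]/f·E[X₁,…,Xₙ]` (with `f = ∑ aᵢXᵢ`, the polynomial module
realized as `A[X] ⊗[A] E`) iff every family proportional to `(a₁,…,aₙ)` is a multiple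
of it; moreover the multiplier is then unique. -/
theorem stmt10 {A : Type*} [CommRing A] {E : Type*} [AddCommGroup E] [Module A E]
    {n : ℕ} (a : Fin n → A)
    (hreg : ∀ x : E, (∀ i, a i • x = 0) → x = 0) :
    ((∀ g : MvPolynomial (Fin n) A ⊗[A] E,
        (∀ i, (C (a i) : MvPolynomial (Fin n) A) • g ∈
          Ideal.span {∑ i, C (a i) * (X i : MvPolynomial (Fin n) A)} •
            (⊤ : Submodule (MvPolynomial (Fin n) A) (MvPolynomial (Fin n) A ⊗[A] E))) →
        g ∈ Ideal.span {∑ i, C (a i) * (X i : MvPolynomial (Fin n) A)} •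
            (⊤ : Submodule (MvPolynomial (Fin n) A) (MvPolynomial (Fin n) A ⊗[A] E))) ↔
      (∀ v : Fin n → E, (∀ i j, a i • v j = a j • v i) → ∃ w : E, ∀ i, v i = a i • w))
    ∧
    ((∀ g : MvPolynomial (Fin n) A ⊗[A] E,
        (∀ i, (C (a i) : MvPolynomial (Fin n) A) • g ∈
          Ideal.span {∑ i, C (a i) * (X i : MvPolynomial (Fin n) A)} •
            (⊤ : Submodule (MvPolynomial (Fin n) A) (MvPolynomial (Fin n) A ⊗[A] E))) →
        g ∈ Ideal.span {∑ i, C (a i) * (X i : MvPolynomial (Fin n) A)} •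
            (⊤ : Submodule (MvPolynomial (Fin n) A) (MvPolynomial (Fin n) A ⊗[A] E))) ↔
      (∀ v : Fin n → E, (∀ i j, a i • v j = a j • v i) → ∃! w : E, ∀ i, v i = a i • w)) := by
  have depth_iff := (DepthTwo.forall_mem_span_smul_top_iff a).trans
    (DepthTwo.forall_mem_range_genericFormMul_iff a hreg)
  exact ⟨depth_iff, depth_iff.trans <|
    forall₂_congr fun v _ => (DepthTwo.existsUnique_iff_exists a hreg v).symm⟩
end

section
/- Let A be a commutative ring with regular elements a₁, …, aₙ generating an ideal whose annihilator is zero (coregular family), and suppose Gr_A(a₁,…,aₙ) ≥ 2, i.e. for every family (v₁,…,vₙ) in A proportional to (a₁,…,aₙ) there is v with vᵢ = aᵢv. Then 1 is a strong gcd of (a₁,…,aₙ): whenever y is a regular element dividing x·aᵢ for all i, y divides x. -/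
/-- If `(a₁,…,aₙ)` is a coregular family (the ideal it generates has zero annihilator)
with `Gr ≥ 2` (every proportional family is a multiple), then `1` is a strong gcd of
`(a₁,…,aₙ)`: any regular `y` dividing all the `x·aᵢ` divides `x`. -/
theorem stmt11 {A : Type*} [CommRing A] {n : ℕ} (a : Fin n → A)
    (hfaith : ∀ x : A, (∀ i, a i * x = 0) → x = 0)
    (hgr2 : ∀ v : Fin n → A, (∀ i j, a i * v j = a j * v i) → ∃ w, ∀ i, v i = a i * w) :
    ∀ y x : A, (∀ z, y * z = 0 → z = 0) → (∀ i, y ∣ x * a i) → y ∣ x := by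
  intro y x hy hdvd
  choose v hv using hdvd
  obtain ⟨w, hw⟩ := hgr2 v (by
    intro i j
    apply eq_of_sub_eq_zero
    apply hy
    have : y * (a i * v j) = y * (a j * v i) := by
      calc y * (a i * v j) = a i * (y * v j) := by ring
        _ = a i * (x * a j) := by rw [← hv j]
        _ = a j * (x * a i) := by ring
        _ = a j * (y * v i) := by rw [hv i]
        _ = y * (a j * v i) := by ring
    rw [mul_sub, this, sub_self])
  refine ⟨w, ?_⟩
  apply eq_of_sub_eq_zero
  apply hfaith
  intro i
  have := hv i
  rw [hw i] at this
  rw [mul_sub]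
  calc a i * x - a i * (y * w) = x * a i - y * (a i * w) := by ring
    _ = 0 := by rw [this, sub_self]
end

section
/- Let a₁, a₂ be regular elements of a commutative ring A. Then (a₁, a₂) admits a strong gcd if and only if (a₁, a₂) admits an lcm m (i.e. ⟨a₁⟩ ∩ ⟨a₂⟩ = ⟨m⟩), and in that case g = a₁a₂/m is a strong gcd of (a₁, a₂). -/
/-- `g` is a strong gcd of `(a₁, a₂)`: it divides both, and every regular element
dividing `x·a₁` and `x·a₂` divides `x·g`. -/
def IsStrongGcd {A : Type*} [CommRing A] (a₁ a₂ g : A) : Prop :=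
  g ∣ a₁ ∧ g ∣ a₂ ∧
    ∀ y x : A, (∀ z, y * z = 0 → z = 0) → y ∣ x * a₁ → y ∣ x * a₂ → y ∣ x * g

/-- For regular `a₁, a₂`: a strong gcd exists iff an lcm exists
(`⟨a₁⟩ ∩ ⟨a₂⟩ = ⟨m⟩`), and then `g = a₁a₂/m` is a strong gcd. -/
theorem stmt12 {A : Type*} [CommRing A] (a₁ a₂ : A)
    (h₁ : ∀ z : A, a₁ * z = 0 → z = 0) (h₂ : ∀ z : A, a₂ * z = 0 → z = 0) :
    ((∃ g, IsStrongGcd a₁ a₂ g) ↔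
      ∃ m, Ideal.span {a₁} ⊓ Ideal.span {a₂} = Ideal.span {m})
    ∧ ∀ m g : A, Ideal.span {a₁} ⊓ Ideal.span {a₂} = Ideal.span {m} →
        m * g = a₁ * a₂ → IsStrongGcd a₁ a₂ g := by
  have key : ∀ m g : A, Ideal.span {a₁} ⊓ Ideal.span {a₂} = Ideal.span {m} →
      m * g = a₁ * a₂ → IsStrongGcd a₁ a₂ g := by
    intro m g hm hmg
    have hmem : m ∈ Ideal.span {a₁} ⊓ Ideal.span {a₂} := by
      rw [hm]; exact Ideal.mem_span_singleton_self m
    obtain ⟨hm1, hm2⟩ := Ideal.mem_inf.mp hmem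
    obtain ⟨u, hu⟩ := Ideal.mem_span_singleton'.mp hm1  -- u * a₁ = m
    obtain ⟨v, hv⟩ := Ideal.mem_span_singleton'.mp hm2  -- v * a₂ = m
    have hmreg : ∀ z : A, m * z = 0 → z = 0 := by
      intro z hz
      apply h₂
      apply h₁ (a₂ * z)
      have h : a₁ * (a₂ * z) = g * (m * z) := by linear_combination -z * hmg
      rw [h, hz, mul_zero]
    have hg1 : g ∣ a₁ := by
      have hz : a₂ * (a₁ - g * v) = 0 := by
        calc a₂ * (a₁ - g * v) = a₁ * a₂ - (v * a₂) * g := by ring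
          _ = m * g - m * g := by rw [hv, hmg]
          _ = 0 := by ring
      exact ⟨v, sub_eq_zero.mp (h₂ _ hz)⟩
    have hg2 : g ∣ a₂ := by
      have hz : a₁ * (a₂ - g * u) = 0 := by
        calc a₁ * (a₂ - g * u) = a₁ * a₂ - (u * a₁) * g := by ring
          _ = m * g - m * g := by rw [hu, hmg]
          _ = 0 := by ring
      exact ⟨u, sub_eq_zero.mp (h₁ _ hz)⟩
    refine ⟨hg1, hg2, ?_⟩
    rintro y x hy ⟨s, hs⟩ ⟨t, ht⟩
    have hst : s * a₂ = t * a₁ := by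
      have hz : y * (s * a₂ - t * a₁) = 0 := by
        calc y * (s * a₂ - t * a₁) = (y * s) * a₂ - (y * t) * a₁ := by ring
          _ = (x * a₁) * a₂ - (x * a₂) * a₁ := by rw [← hs, ← ht]
          _ = 0 := by ring
      exact sub_eq_zero.mp (hy _ hz)
    have hmem2 : s * a₂ ∈ Ideal.span {a₁} ⊓ Ideal.span {a₂} :=
      Ideal.mem_inf.mpr ⟨Ideal.mem_span_singleton'.mpr ⟨t, by rw [hst]⟩,
        Ideal.mem_span_singleton'.mpr ⟨s, rfl⟩⟩
    rw [hm] at hmem2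
    obtain ⟨w, hw⟩ := Ideal.mem_span_singleton'.mp hmem2  -- w * m = s * a₂
    refine ⟨w, ?_⟩
    have hz : m * (x * g - y * w) = 0 := by
      calc m * (x * g - y * w) = x * (m * g) - (w * m) * y := by ring
        _ = x * (a₁ * a₂) - (s * a₂) * y := by rw [hmg, hw]
        _ = (x * a₁) * a₂ - (y * s) * a₂ := by ring
        _ = 0 := by rw [← hs]; ring
    exact sub_eq_zero.mp (hmreg _ hz)
  refine ⟨⟨?_, ?_⟩, key⟩
  · rintro ⟨g, ⟨b₁, hb₁⟩, ⟨b₂, hb₂⟩, hg3⟩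
    have hgreg : ∀ z, g * z = 0 → z = 0 := by
      intro z hz
      apply h₁
      rw [hb₁]
      calc g * b₁ * z = b₁ * (g * z) := by ring
        _ = 0 := by rw [hz, mul_zero]
    refine ⟨a₁ * b₂, ?_⟩
    ext w
    simp only [Ideal.mem_inf, Ideal.mem_span_singleton]
    constructor
    · rintro ⟨⟨s, hs⟩, ⟨t, ht⟩⟩
      have ha2s : a₂ ∣ s * a₁ := ⟨t, by rw [mul_comm, ← hs, ht]⟩
      have ha2s2 : a₂ ∣ s * a₂ := ⟨s, mul_comm s a₂⟩
      obtain ⟨r, hr⟩ := hg3 a₂ s h₂ ha2s ha2s2  -- s * g = a₂ * r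
      have hsr : s = b₂ * r := by
        apply sub_eq_zero.mp
        apply hgreg
        linear_combination hr + r * hb₂
      exact ⟨r, by rw [hs, hsr]; ring⟩
    · rintro ⟨r, hr⟩
      refine ⟨⟨b₂ * r, by rw [hr]; ring⟩, ⟨b₁ * r, ?_⟩⟩
      rw [hr, hb₁, hb₂]; ring
  · rintro ⟨m, hm⟩
    have : a₁ * a₂ ∈ Ideal.span {m} := by
      rw [← hm]
      exact Ideal.mem_inf.mpr ⟨Ideal.mem_span_singleton'.mpr ⟨a₂, mul_comm a₂ a₁⟩,
        Ideal.mem_span_singleton'.mpr ⟨a₁, rfl⟩⟩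
    obtain ⟨g, hg⟩ := Ideal.mem_span_singleton'.mp this
    exact ⟨g, key m g hm (by rw [mul_comm]; exact hg)⟩
end

section
/- Let A be a commutative ring and (a₁, a₂) a pair of regular elements. The sequence (a₁, a₂) is A-regular (a₂ is regular modulo a₁) if and only if a₁a₂ is an lcm of a₁ and a₂, i.e. ⟨a₁⟩ ∩ ⟨a₂⟩ = ⟨a₁a₂⟩. In particular, in this case (a₂, a₁) is also a regular sequence. -/
/-- For regular elements `a₁, a₂`: the sequence `(a₁, a₂)` is regular (`a₂` regular
mod `a₁`) iff `a₁a₂` is an lcm of `a₁` and `a₂`; and in that case `(a₂, a₁)` is also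
a regular sequence. -/
theorem stmt13 {A : Type*} [CommRing A] (a₁ a₂ : A)
    (h₁ : ∀ z : A, a₁ * z = 0 → z = 0) (h₂ : ∀ z : A, a₂ * z = 0 → z = 0) :
    ((∀ x : A, a₂ * x ∈ Ideal.span {a₁} → x ∈ Ideal.span {a₁}) ↔
      Ideal.span {a₁} ⊓ Ideal.span {a₂} = Ideal.span {a₁ * a₂})
    ∧ ((∀ x : A, a₂ * x ∈ Ideal.span {a₁} → x ∈ Ideal.span {a₁}) →
        ∀ x : A, a₁ * x ∈ Ideal.span {a₂} → x ∈ Ideal.span {a₂}) := by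
  have key : (∀ x : A, a₂ * x ∈ Ideal.span {a₁} → x ∈ Ideal.span {a₁}) →
      Ideal.span {a₁} ⊓ Ideal.span {a₂} = Ideal.span {a₁ * a₂} := by
    intro hreg
    apply le_antisymm
    · intro x hx
      obtain ⟨hx1, hx2⟩ := Ideal.mem_inf.mp hx
      rw [Ideal.mem_span_singleton] at hx1 hx2 ⊢
      obtain ⟨u, hu⟩ := hx1
      obtain ⟨v, hv⟩ := hx2
      have : a₁ ∣ v := by
        have := hreg v (Ideal.mem_span_singleton.2 ⟨u, by rw [← hv]; exact hu⟩)
        rwa [Ideal.mem_span_singleton] at this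
      obtain ⟨w, hw⟩ := this
      exact ⟨w, by rw [hv, hw]; ring⟩
    · rw [Ideal.span_singleton_le_iff_mem]
      exact Ideal.mem_inf.mpr
        ⟨Ideal.mem_span_singleton.2 ⟨a₂, rfl⟩,
         Ideal.mem_span_singleton.2 ⟨a₁, mul_comm _ _⟩⟩
  constructor
  · constructor
    · exact key
    · intro heq x hx
      have : a₂ * x ∈ Ideal.span {a₁} ⊓ Ideal.span {a₂} :=
        Ideal.mem_inf.mpr ⟨hx, Ideal.mem_span_singleton.2 ⟨x, rfl⟩⟩
      rw [heq, Ideal.mem_span_singleton] at this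
      obtain ⟨w, hw⟩ := this
      refine Ideal.mem_span_singleton.2 ⟨w, sub_eq_zero.mp (h₂ (x - a₁ * w) ?_)⟩
      have h : a₂ * x = a₂ * (a₁ * w) := by rw [hw]; ring
      rw [mul_sub, h, sub_self]
  · intro hreg x hx
    have : a₁ * x ∈ Ideal.span {a₁} ⊓ Ideal.span {a₂} :=
      Ideal.mem_inf.mpr ⟨Ideal.mem_span_singleton.2 ⟨x, rfl⟩, hx⟩
    rw [key hreg, Ideal.mem_span_singleton] at this
    obtain ⟨w, hw⟩ := this
    refine Ideal.mem_span_singleton.2 ⟨w, sub_eq_zero.mp (h₁ (x - a₂ * w) ?_)⟩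
    have h : a₁ * x = a₁ * (a₂ * w) := by rw [hw]; ring
    rw [mul_sub, h, sub_self]
end

section
/- (Dedekind–Mertens for modules) Let A be a commutative ring, f ∈ A[T], E an A-module and g ∈ E[T] with m ≥ deg g. Then c(f)^{m+1}·c(g) = c(f)^m·c(fg), where c(g) denotes the submodule of E generated by the coefficients of g and c(f) the ideal of A generated by the coefficients of f. -/
/-!
Induction on `m`. Write `g = g₁ + b Tᵐ⁺¹` with `deg g₁ ≤ m`, put `F = c(f)` and let `F_M` be the
ideal generated by the coefficients `f_j` with `j ≥ M`. Reading off the coefficient of `Tⁱ⁺ᵐ⁺¹` in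
`fg` gives `f_i b ∈ c(fg) + F_{i+1} c(g₁)`, and the induction hypothesis gives
`F^{m+1} c(g₁) ⊆ F^m c(fg₁) ⊆ F^m c(fg) + F^{m+1} b`. Together they show
`F_M F^{m+1} b ⊆ F^{m+1} c(fg)` by descending induction on `M`, starting from `F_M = 0` for
`M > deg f`. At `M = 0` this bounds the `b`-part of `F^{m+2} c(g)`, and then also its `c(g₁)`-part.
The reverse inclusion is `c(fg) ⊆ F c(g)`.
-/

open Polynomial Submodule Finset.HasAntidiagonal

section

variable {A E : Type*} [CommRing A] [AddCommGroup E] [Module A E]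

namespace Submodule

theorem smul_smul_comm (I J : Ideal A) (P : Submodule A E) : I • J • P = J • I • P := by
  rw [← Submodule.mul_smul, mul_comm, Submodule.mul_smul]

variable {F : Ideal A} {T : ℕ → Ideal A} {N k : ℕ} {B G C : Submodule A E}

theorem smul_pow_succ_smul_le_of_descent (hTF : ∀ M, T M ≤ F) (hTN : ∀ M, N ≤ M → T M = ⊥)
    (hG : F ^ (k + 1) • G ≤ F ^ k • C ⊔ F ^ (k + 1) • B)
    (hB : ∀ M, T M • B ≤ C ⊔ T (M + 1) • G) (M : ℕ) :
    T M • F ^ (k + 1) • B ≤ F ^ (k + 1) • C := by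
  suffices ∀ j M, N ≤ M + j → T M • F ^ (k + 1) • B ≤ F ^ (k + 1) • C from this N M (by omega)
  intro j
  induction j with
  | zero =>
    intro M hM
    simp [hTN M hM]
  | succ j ih =>
    intro M hM
    have hTC : T (M + 1) • F ^ k • C ≤ F ^ (k + 1) • C := by
      rw [pow_succ', Submodule.mul_smul]
      exact smul_mono_left (hTF _)
    calc T M • F ^ (k + 1) • B
        = F ^ (k + 1) • T M • B := smul_smul_comm _ _ _
      _ ≤ F ^ (k + 1) • (C ⊔ T (M + 1) • G) := smul_mono_right _ (hB M)
      _ = F ^ (k + 1) • C ⊔ T (M + 1) • F ^ (k + 1) • G := by rw [smul_sup, smul_smul_comm]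
      _ ≤ F ^ (k + 1) • C ⊔ (T (M + 1) • F ^ k • C ⊔ T (M + 1) • F ^ (k + 1) • B) := by
        rw [← smul_sup]
        exact sup_le_sup_left (smul_mono_right _ hG) _
      _ ≤ F ^ (k + 1) • C := sup_le le_rfl (sup_le hTC (ih (M + 1) (by omega)))

theorem pow_add_two_smul_sup_le_of_descent (hTF : ∀ M, T M ≤ F) (hTN : ∀ M, N ≤ M → T M = ⊥)
    (hFT : F ≤ T 0) (hG : F ^ (k + 1) • G ≤ F ^ k • C ⊔ F ^ (k + 1) • B)
    (hB : ∀ M, T M • B ≤ C ⊔ T (M + 1) • G) :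
    F ^ (k + 2) • (B ⊔ G) ≤ F ^ (k + 1) • C := by
  have hFB : F ^ (k + 2) • B ≤ F ^ (k + 1) • C := by
    rw [pow_succ', Submodule.mul_smul]
    exact (smul_mono_left hFT).trans (smul_pow_succ_smul_le_of_descent hTF hTN hG hB 0)
  have hFG : F ^ (k + 2) • G ≤ F ^ (k + 1) • C :=
    calc F ^ (k + 2) • G = F • F ^ (k + 1) • G := by rw [pow_succ', Submodule.mul_smul]
      _ ≤ F • (F ^ k • C ⊔ F ^ (k + 1) • B) := smul_mono_right _ hG
      _ = F ^ (k + 1) • C ⊔ F ^ (k + 2) • B := by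
        rw [smul_sup, ← Submodule.mul_smul, ← Submodule.mul_smul, ← pow_succ', ← pow_succ']
      _ ≤ F ^ (k + 1) • C := sup_le le_rfl hFB
  rw [smul_sup]
  exact sup_le hFB hFG

end Submodule

namespace Polynomial

theorem span_range_coeff (p : A[X]) : Ideal.span (Set.range p.coeff) = p.contentIdeal :=
  le_antisymm (Ideal.span_le.2 (Set.range_subset_iff.2 p.coeff_mem_contentIdeal))
    (Ideal.span_mono fun _ hc ↦ by
      obtain ⟨n, -, rfl⟩ := mem_coeffs_iff.1 hc
      exact ⟨n, rfl⟩)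

def tailContentIdeal (p : A[X]) (M : ℕ) : Ideal A := Ideal.span (p.coeff '' Set.Ici M)

theorem coeff_mem_tailContentIdeal (p : A[X]) {M n : ℕ} (h : M ≤ n) :
    p.coeff n ∈ p.tailContentIdeal M :=
  Ideal.subset_span ⟨n, h, rfl⟩

theorem tailContentIdeal_le_contentIdeal (p : A[X]) (M : ℕ) :
    p.tailContentIdeal M ≤ p.contentIdeal :=
  Ideal.span_le.2 (Set.image_subset_iff.2 fun n _ ↦ p.coeff_mem_contentIdeal n)

theorem contentIdeal_le_tailContentIdeal_zero (p : A[X]) :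
    p.contentIdeal ≤ p.tailContentIdeal 0 := by
  rw [← span_range_coeff]
  exact Ideal.span_le.2 (Set.range_subset_iff.2 fun n ↦ p.coeff_mem_tailContentIdeal n.zero_le)

theorem tailContentIdeal_eq_bot (p : A[X]) {M : ℕ} (h : p.natDegree < M) :
    p.tailContentIdeal M = ⊥ :=
  Ideal.span_eq_bot.2 fun _ ⟨_, hn, hc⟩ ↦ hc ▸ coeff_eq_zero_of_natDegree_lt (h.trans_le hn)

end Polynomial

namespace PolynomialModule

def content (g : PolynomialModule A E) : Submodule A E := Submodule.span A (Set.range g.coeff)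

theorem coeff_mem_content (g : PolynomialModule A E) (n : ℕ) : g.coeff n ∈ g.content :=
  subset_span ⟨n, rfl⟩

theorem content_le_iff {g : PolynomialModule A E} {P : Submodule A E} :
    g.content ≤ P ↔ ∀ n, g.coeff n ∈ P := by
  rw [content, span_le, Set.range_subset_iff]; rfl

@[simp]
theorem coeff_sub (g h : PolynomialModule A E) : (g - h).coeff = g.coeff - h.coeff := rfl

theorem content_add_le (g h : PolynomialModule A E) : (g + h).content ≤ g.content ⊔ h.content :=
  content_le_iff.2 fun n ↦ add_mem (mem_sup_left (g.coeff_mem_content n))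
    (mem_sup_right (h.coeff_mem_content n))

theorem content_sub_le (g h : PolynomialModule A E) : (g - h).content ≤ g.content ⊔ h.content :=
  content_le_iff.2 fun n ↦ sub_mem (mem_sup_left (g.coeff_mem_content n))
    (mem_sup_right (h.coeff_mem_content n))

theorem content_single_le (n : ℕ) (b : E) : (single A n b).content ≤ span A {b} :=
  content_le_iff.2 fun k ↦ by
    rw [coeff_single, Finsupp.single_apply]
    split_ifs
    · exact mem_span_singleton_self b
    · exact zero_mem _

theorem content_smul_le (f : A[X]) (g : PolynomialModule A E) :
    (f • g).content ≤ f.contentIdeal • g.content :=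
  content_le_iff.2 fun n ↦ by
    rw [smul_apply]
    exact sum_mem fun p _ ↦ smul_mem_smul (f.coeff_mem_contentIdeal _) (g.coeff_mem_content _)

/-- In `(f • g)_{i+n} = ∑_{p+q=i+n} f_p g_q`, the terms with `q > n` vanish and those with `q < n`
have `p > i`. -/
theorem coeff_smul_coeff_mem (f : A[X]) {g : PolynomialModule A E} {n : ℕ}
    (hg : ∀ k, n < k → g.coeff k = 0) (i : ℕ) :
    f.coeff i • g.coeff n ∈
      (f • g).content ⊔ f.tailContentIdeal (i + 1) • span A (g.coeff '' Set.Iio n) := by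
  have hsplit := Finset.add_sum_erase (antidiagonal (i + n))
    (fun p ↦ f.coeff p.1 • g.coeff p.2) (a := (i, n)) (mem_antidiagonal.2 rfl)
  rw [← smul_apply, eq_comm, ← sub_eq_iff_eq_add'] at hsplit
  rw [← sub_sub_cancel ((f • g).coeff (i + n)) (f.coeff i • g.coeff n), hsplit]
  refine sub_mem (mem_sup_left ((f • g).coeff_mem_content _)) (mem_sup_right (sum_mem ?_))
  rintro ⟨p, q⟩ hpq
  obtain ⟨hne, hsum⟩ := Finset.mem_erase.1 hpq
  rw [mem_antidiagonal] at hsum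
  rcases lt_or_ge n q with hq | hq
  · rw [hg q hq, smul_zero]
    exact zero_mem _
  · have hqn : q < n := lt_of_le_of_ne hq fun h ↦ hne (by simp only [Prod.mk.injEq]; omega)
    exact smul_mem_smul (f.coeff_mem_tailContentIdeal (by omega)) (subset_span ⟨q, hqn, rfl⟩)

theorem tailContentIdeal_smul_span_coeff_le (f : A[X]) {g : PolynomialModule A E} {n : ℕ}
    (hg : ∀ k, n < k → g.coeff k = 0) (M : ℕ) :
    f.tailContentIdeal M • span A {g.coeff n} ≤
      (f • g).content ⊔ f.tailContentIdeal (M + 1) • span A (g.coeff '' Set.Iio n) := by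
  rw [tailContentIdeal, span_smul_span, span_le]
  rintro _ ⟨_, ⟨i, hi, rfl⟩, _, rfl, rfl⟩
  have hmono : f.tailContentIdeal (i + 1) ≤ f.tailContentIdeal (M + 1) :=
    Ideal.span_mono (Set.image_mono (Set.Ici_subset_Ici.2 (by simpa using hi)))
  exact sup_le_sup_left (smul_mono_left hmono) (f • g).content (coeff_smul_coeff_mem f hg i)

theorem contentIdeal_pow_smul_content_smul_le (f : A[X]) (g : PolynomialModule A E) (m : ℕ) :
    f.contentIdeal ^ m • (f • g).content ≤ f.contentIdeal ^ (m + 1) • g.content := by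
  rw [pow_succ, Submodule.mul_smul]
  exact smul_mono_right _ (content_smul_le f g)

theorem contentIdeal_smul_content_le (f : A[X]) {g : PolynomialModule A E}
    (hg : ∀ k, 0 < k → g.coeff k = 0) : f.contentIdeal • g.content ≤ (f • g).content := by
  have hg0 : g.content ≤ span A {g.coeff 0} := content_le_iff.2 fun k ↦ by
    rcases k.eq_zero_or_pos with rfl | hk
    · exact mem_span_singleton_self _
    · rw [hg k hk]
      exact zero_mem _
  have hbase : f.tailContentIdeal 0 • span A {g.coeff 0} ≤ (f • g).content := by
    simpa using tailContentIdeal_smul_span_coeff_le f hg 0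
  exact (smul_mono f.contentIdeal_le_tailContentIdeal_zero hg0).trans hbase

theorem contentIdeal_pow_add_two_smul_content_le (f : A[X]) {g : PolynomialModule A E} {m : ℕ}
    (hg : ∀ k, m + 1 < k → g.coeff k = 0)
    (ih : ∀ g₁ : PolynomialModule A E, (∀ k, m < k → g₁.coeff k = 0) →
      f.contentIdeal ^ (m + 1) • g₁.content ≤ f.contentIdeal ^ m • (f • g₁).content) :
    f.contentIdeal ^ (m + 2) • g.content ≤ f.contentIdeal ^ (m + 1) • (f • g).content := by
  set b := g.coeff (m + 1)
  set g₁ := g - single A (m + 1) b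
  have hg₁_eq : ∀ k, k ≠ m + 1 → g₁.coeff k = g.coeff k := fun k hk ↦ by
    simp [g₁, Ne.symm hk]
  have hg₁ : ∀ k, m < k → g₁.coeff k = 0 := fun k hk ↦ by
    rcases eq_or_ne k (m + 1) with rfl | hk'
    · simp [g₁, b]
    · rw [hg₁_eq k hk']
      exact hg k (by omega)
  have hfg₁ : (f • g₁).content ≤ (f • g).content ⊔ f.contentIdeal • span A {b} := by
    rw [smul_sub]
    exact (content_sub_le _ _).trans (sup_le_sup_left
      ((content_smul_le _ _).trans (smul_mono_right _ (content_single_le _ _))) _)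
  have hG : f.contentIdeal ^ (m + 1) • g₁.content ≤
      f.contentIdeal ^ m • (f • g).content ⊔ f.contentIdeal ^ (m + 1) • span A {b} := by
    refine (ih g₁ hg₁).trans ((smul_mono_right _ hfg₁).trans_eq ?_)
    rw [smul_sup, ← Submodule.mul_smul, ← pow_succ]
  have hB : ∀ M, f.tailContentIdeal M • span A {b} ≤
      (f • g).content ⊔ f.tailContentIdeal (M + 1) • g₁.content := fun M ↦ by
    refine (tailContentIdeal_smul_span_coeff_le f hg M).trans
      (sup_le_sup_left (smul_mono_right _ (span_le.2 ?_)) _)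
    rintro _ ⟨k, hk, rfl⟩
    rw [← hg₁_eq k (Set.mem_Iio.1 hk).ne]
    exact g₁.coeff_mem_content k
  have hsplit : g.content ≤ span A {b} ⊔ g₁.content :=
    calc g.content = (single A (m + 1) b + g₁).content := by rw [add_sub_cancel]
      _ ≤ span A {b} ⊔ g₁.content :=
        (content_add_le _ _).trans (sup_le_sup_right (content_single_le _ _) _)
  exact (smul_mono_right _ hsplit).trans (pow_add_two_smul_sup_le_of_descent
    f.tailContentIdeal_le_contentIdeal (fun M hM ↦ f.tailContentIdeal_eq_bot hM)
    f.contentIdeal_le_tailContentIdeal_zero hG hB)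

theorem contentIdeal_pow_succ_smul_content_le (f : A[X]) (m : ℕ) :
    ∀ g : PolynomialModule A E, (∀ k, m < k → g.coeff k = 0) →
      f.contentIdeal ^ (m + 1) • g.content ≤ f.contentIdeal ^ m • (f • g).content := by
  induction m with
  | zero =>
    intro g hg
    simpa using contentIdeal_smul_content_le f hg
  | succ m ih => exact fun g hg ↦ contentIdeal_pow_add_two_smul_content_le f hg ih

theorem contentIdeal_pow_succ_smul_content (f : A[X]) {g : PolynomialModule A E} {m : ℕ}
    (hg : ∀ k, m < k → g.coeff k = 0) :
    f.contentIdeal ^ (m + 1) • g.content = f.contentIdeal ^ m • (f • g).content :=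
  le_antisymm (contentIdeal_pow_succ_smul_content_le f m g hg)
    (contentIdeal_pow_smul_content_smul_le f g m)

end PolynomialModule

end

/-- Dedekind–Mertens for modules: for `f ∈ A[T]`, `g ∈ E[T]` with `deg g ≤ m`,
`c(f)^{m+1} · c(g) = c(f)^m · c(fg)`. -/
theorem stmt15 {A : Type*} [CommRing A] {E : Type*} [AddCommGroup E] [Module A E]
    (f : Polynomial A) (g : PolynomialModule A E) (m : ℕ)
    (hdeg : ∀ k, m < k → g.coeff k = 0) :
    (Ideal.span (Set.range f.coeff)) ^ (m + 1) • Submodule.span A (Set.range g.coeff) =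
      (Ideal.span (Set.range f.coeff)) ^ m • Submodule.span A (Set.range (f • g).coeff) := by
  rw [span_range_coeff]
  exact PolynomialModule.contentIdeal_pow_succ_smul_content f hdeg
end

section
/- A sequence (x₀, …, x_k) in a commutative ring A that is both completely secant (the ideal it generates has depth ≥ k+1, witnessed by regularity of an associated Kronecker sequence) and singular (0 ∈ the iterated Krull boundary monoid S_K(x₀,…,x_k)) is unimodular: 1 ∈ ⟨x₀, …, x_k⟩. As a concrete consequence: if (a₁,…,aₙ) is an A-regular sequence, x ∈ A, and x·a₁^{e₁}⋯aₙ^{eₙ} ∈ ⟨a₁^{e₁+1}, …, aₙ^{eₙ+1}⟩ for some exponents eᵢ ∈ ℕ, then x ∈ ⟨a₁, …, aₙ⟩. -/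
section Aux
variable {A : Type*} [CommRing A]

def RegMod (K : Ideal A) : List A → Prop
  | [] => True
  | c :: cs => (∀ t, c * t ∈ K → t ∈ K) ∧ RegMod (K ⊔ Ideal.span {c}) cs

@[simp] lemma regMod_nil (K : Ideal A) : RegMod K ([] : List A) := trivial

lemma regMod_cons {K : Ideal A} {c : A} {cs : List A} :
    RegMod K (c :: cs) ↔ (∀ t, c * t ∈ K → t ∈ K) ∧ RegMod (K ⊔ Ideal.span {c}) cs :=
  Iff.rfl

lemma regMod_congr {K K' : Ideal A} {l : List A} (h : K = K') (hr : RegMod K l) :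
    RegMod K' l := h ▸ hr

lemma mem_sup_span_singleton {K : Ideal A} {c x : A} :
    x ∈ K ⊔ Ideal.span {c} ↔ ∃ s, x - s * c ∈ K := by
  rw [Submodule.mem_sup]
  constructor
  · rintro ⟨k, hk, y, hy, rfl⟩
    obtain ⟨s, rfl⟩ := Ideal.mem_span_singleton'.mp hy
    exact ⟨s, by simpa using hk⟩
  · rintro ⟨s, hs⟩
    exact ⟨x - s * c, hs, s * c, Ideal.mem_span_singleton'.mpr ⟨s, rfl⟩, by ring⟩

lemma nzd_pow {K : Ideal A} {c : A} (hc : ∀ t, c * t ∈ K → t ∈ K) :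
    ∀ (m : ℕ) (t : A), c ^ m * t ∈ K → t ∈ K := by
  intro m
  induction m with
  | zero => intro t ht; simpa using ht
  | succ m ih =>
    intro t ht
    exact hc t (ih (c * t) (by rw [← mul_assoc, ← pow_succ]; exact ht))

/-- The "short exact sequence" lemma: if `·c : A/K₁ → A/K₂` is injective and well-defined,
and `ds` is regular both on `A/K₁` and on `A/(K₂ + (c))`, then `ds` is regular on `A/K₂`. -/
lemma regMod_of_ses : ∀ (ds : List A) (K₁ K₂ : Ideal A) (c : A),
    (∀ t, c * t ∈ K₂ → t ∈ K₁) → (∀ u ∈ K₁, c * u ∈ K₂) →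
    RegMod K₁ ds → RegMod (K₂ ⊔ Ideal.span {c}) ds → RegMod K₂ ds := by
  intro ds
  induction ds with
  | nil => intros; trivial
  | cons d ds ih =>
    intro K₁ K₂ c hinj hcK h1 h3
    obtain ⟨h1a, h1b⟩ := h1
    obtain ⟨h3a, h3b⟩ := h3
    constructor
    · -- d is NZD mod K₂
      intro t ht
      have ht3 : t ∈ K₂ ⊔ Ideal.span {c} :=
        h3a t (Submodule.mem_sup_left ht)
      obtain ⟨s, hs⟩ := mem_sup_span_singleton.mp ht3
      -- d * (t - s*c) ∈ K₂, and d*t ∈ K₂ so c * (d * s) ∈ K₂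
      have h4 : c * (d * s) ∈ K₂ := by
        have := K₂.mul_mem_left d hs
        have h5 : d * t - d * (t - s * c) ∈ K₂ := Ideal.sub_mem _ ht this
        have : d * t - d * (t - s * c) = c * (d * s) := by ring
        rwa [this] at h5
      have h6 : d * s ∈ K₁ := hinj _ h4
      have h7 : s ∈ K₁ := h1a s h6
      have h8 : c * s ∈ K₂ := hcK s h7
      have : t = (t - s * c) + s * c := by ring
      rw [this]
      exact Ideal.add_mem _ hs (by rwa [mul_comm] at h8)
    · -- regular mod K₂ + (d)
      apply ih (K₁ ⊔ Ideal.span {d}) (K₂ ⊔ Ideal.span {d}) c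
      · -- injectivity of ·c : A/(K₁+(d)) → A/(K₂+(d))
        intro t ht
        obtain ⟨v, hv⟩ := mem_sup_span_singleton.mp ht
        -- c*t - v*d ∈ K₂, so d*v ∈ K₂ + (c)
        have hdv : d * v ∈ K₂ ⊔ Ideal.span {c} := by
          apply mem_sup_span_singleton.mpr ⟨t, _⟩
          have : d * v - t * c = -(c * t - v * d) := by ring
          rw [this]
          exact neg_mem hv
        have hv3 : v ∈ K₂ ⊔ Ideal.span {c} := h3a v hdv
        obtain ⟨w, hw⟩ := mem_sup_span_singleton.mp hv3
        -- c * (t - w*d) ∈ K₂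
        have h9 : c * (t - w * d) ∈ K₂ := by
          have hA := K₂.mul_mem_left d hw
          have : c * (t - w * d) = (c * t - v * d) + d * (v - w * c) := by ring
          rw [this]
          exact Ideal.add_mem _ hv hA
        have h10 : t - w * d ∈ K₁ := hinj _ h9
        exact mem_sup_span_singleton.mpr ⟨w, h10⟩
      · -- well-definedness
        intro u hu
        obtain ⟨v, hv⟩ := mem_sup_span_singleton.mp hu
        apply mem_sup_span_singleton.mpr ⟨c * v, _⟩
        have : c * u - c * v * d = c * (u - v * d) := by ring
        rw [this]
        exact hcK _ hv
      · exact h1b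
      · exact regMod_congr (by rw [sup_assoc, sup_assoc, sup_comm (Ideal.span {c})]) h3b

/-- Powers of the head: if `c` is NZD mod `K` and `ds` regular mod `K + (c)`,
then `ds` is regular mod `K + (c^(f+1))`. -/
lemma regMod_pow_head {K : Ideal A} {c : A} (hc : ∀ t, c * t ∈ K → t ∈ K)
    {ds : List A} (h : RegMod (K ⊔ Ideal.span {c}) ds) :
    ∀ f : ℕ, RegMod (K ⊔ Ideal.span {c ^ (f + 1)}) ds := by
  intro f
  induction f with
  | zero => exact regMod_congr (by rw [pow_one]) h
  | succ f ihf =>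
    refine regMod_of_ses ds (K ⊔ Ideal.span {c ^ (f + 1)}) _ c ?hinj ?hcK ihf ?h3
    case hinj =>
      intro t ht
      obtain ⟨u, hu⟩ := mem_sup_span_singleton.mp ht
      have he : c * t - u * c ^ (f + 1 + 1) = c * (t - u * c ^ (f + 1)) := by ring
      rw [he] at hu
      exact mem_sup_span_singleton.mpr ⟨u, hc _ hu⟩
    case hcK =>
      intro u hu
      obtain ⟨v, hv⟩ := mem_sup_span_singleton.mp hu
      refine mem_sup_span_singleton.mpr ⟨v, ?_⟩
      have he : c * u - v * c ^ (f + 1 + 1) = c * (u - v * c ^ (f + 1)) := by ring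
      rw [he]
      exact K.mul_mem_left c hv
    case h3 =>
      apply regMod_congr _ h
      rw [sup_assoc]
      congr 1
      rw [sup_eq_right.mpr]
      rw [Ideal.span_singleton_le_span_singleton]
      exact ⟨c ^ (f + 1), by ring⟩

/-- Span of the elements of a list. -/
def sp (l : List A) : Ideal A := Ideal.span {x | x ∈ l}

@[simp] lemma sp_nil : sp ([] : List A) = ⊥ := by
  unfold sp
  rw [show {x | x ∈ ([] : List A)} = (∅ : Set A) by ext y; simp, Ideal.span_empty]

lemma sp_cons (c : A) (l : List A) : sp (c :: l) = Ideal.span {c} ⊔ sp l := by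
  unfold sp
  rw [show {x | x ∈ c :: l} = insert c {x | x ∈ l} by ext y; simp]
  rw [Ideal.span_insert]

lemma sp_append (l₁ l₂ : List A) : sp (l₁ ++ l₂) = sp l₁ ⊔ sp l₂ := by
  unfold sp
  rw [show {x | x ∈ l₁ ++ l₂} = {x | x ∈ l₁} ∪ {x | x ∈ l₂} by ext y; simp]
  rw [Ideal.span_union]

/-- Regularity of a suffix modulo the prefix. -/
lemma regMod_append_right : ∀ (l₁ : List A) {l₂ : List A} {K : Ideal A},
    RegMod K (l₁ ++ l₂) → RegMod (K ⊔ sp l₁) l₂ := by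
  intro l₁
  induction l₁ with
  | nil => intro l₂ K h; exact regMod_congr (by simp) h
  | cons c l₁ ih =>
    intro l₂ K h
    have h2 := ih h.2
    exact regMod_congr (by rw [sp_cons, ← sup_assoc]) h2

/-- Powered list: each pair `(c, f)` becomes `c ^ (f + 1)`. -/
def powl (l : List (A × ℕ)) : List A := l.map fun p => p.1 ^ (p.2 + 1)

/-- Powers of a regular sequence (prefix part) remain regular. -/
lemma regMod_powl : ∀ (l : List (A × ℕ)) (K : Ideal A) (bs : List A),
    RegMod K (l.map Prod.fst ++ bs) → RegMod K (powl l ++ bs) := by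
  intro l
  induction l with
  | nil => intro K bs h; exact h
  | cons p l ih =>
    obtain ⟨c, f⟩ := p
    intro K bs h
    obtain ⟨hc, h2⟩ := h
    constructor
    · intro t ht
      exact hc t (nzd_pow hc f (c * t) (by rw [← mul_assoc, ← pow_succ]; exact ht))
    · exact ih _ bs (regMod_pow_head hc h2 f)

/-- The last element of a regular sequence stays a non-zero-divisor modulo
(an ideal for which it is NZD) plus the ideal of the later elements. -/
lemma nzd_mod_later : ∀ (bs : List A) (J : Ideal A) (a : A),
    (∀ t, a * t ∈ J → t ∈ J) → RegMod (J ⊔ Ideal.span {a}) bs →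
    ∀ t, a * t ∈ J ⊔ sp bs → t ∈ J ⊔ sp bs := by
  intro bs
  induction bs with
  | nil => intro J a ha hb t ht; simp only [sp_nil, sup_bot_eq] at *; exact ha t ht
  | cons b bs ih =>
    intro J a ha hb t ht
    obtain ⟨hbJ, hb2⟩ := hb
    -- key: a is NZD mod J ⊔ (b)
    have key : ∀ t, a * t ∈ J ⊔ Ideal.span {b} → t ∈ J ⊔ Ideal.span {b} := by
      intro t ht
      obtain ⟨v, hv⟩ := mem_sup_span_singleton.mp ht
      have hbv : b * v ∈ J ⊔ Ideal.span {a} := by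
        refine mem_sup_span_singleton.mpr ⟨t, ?_⟩
        have he : b * v - t * a = -(a * t - v * b) := by ring
        rw [he]; exact neg_mem hv
      have hv2 : v ∈ J ⊔ Ideal.span {a} := hbJ v hbv
      obtain ⟨w, hw⟩ := mem_sup_span_singleton.mp hv2
      have h9 : a * (t - w * b) ∈ J := by
        have hA := J.mul_mem_left b hw
        have he : a * (t - w * b) = (a * t - v * b) + b * (v - w * a) := by ring
        rw [he]; exact Ideal.add_mem _ hv hA
      exact mem_sup_span_singleton.mpr ⟨w, ha _ h9⟩
    have hb2' : RegMod ((J ⊔ Ideal.span {b}) ⊔ Ideal.span {a}) bs :=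
      regMod_congr (by rw [sup_assoc, sup_assoc, sup_comm (Ideal.span {a})]) hb2
    have ht' : a * t ∈ (J ⊔ Ideal.span {b}) ⊔ sp bs := by
      rwa [sp_cons, ← sup_assoc] at ht
    have := ih (J ⊔ Ideal.span {b}) a key hb2' t ht'
    rwa [sp_cons, ← sup_assoc]
    
lemma powl_append (l : List (A × ℕ)) (p : A × ℕ) :
    powl (l ++ [p]) = powl l ++ [p.1 ^ (p.2 + 1)] := by simp [powl]

/-- Main theorem, list version with a tail `bs` of extra generators. -/
theorem main_list : ∀ (l : List (A × ℕ)) (bs : List A) (x : A),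
    RegMod ⊥ (l.map Prod.fst ++ bs) →
    x * (l.map fun p => p.1 ^ p.2).prod ∈ sp (powl l) ⊔ sp bs →
    x ∈ sp (l.map Prod.fst) ⊔ sp bs := by
  intro l
  induction l using List.reverseRecOn with
  | nil =>
    intro bs x _ hx
    simpa [powl] using hx
  | append_singleton l' p IH =>
    obtain ⟨aa, m⟩ := p
    intro bs x hreg hx
    have hreg' : RegMod ⊥ (l'.map Prod.fst ++ (aa :: bs)) := by
      simpa [List.append_assoc] using hreg
    -- `aa` is a non-zero-divisor modulo `sp (powl l') ⊔ sp bs`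
    have hpow := regMod_powl l' ⊥ (aa :: bs) hreg'
    have hsplit := regMod_append_right (powl l') hpow
    rw [bot_sup_eq] at hsplit
    obtain ⟨ha, hbs⟩ := hsplit
    have hNZD : ∀ t, aa * t ∈ sp (powl l') ⊔ sp bs → t ∈ sp (powl l') ⊔ sp bs :=
      nzd_mod_later bs _ aa ha hbs
    -- reshape the main hypothesis
    have hx' : x * (l'.map fun p => p.1 ^ p.2).prod * aa ^ m ∈
        (sp (powl l') ⊔ sp bs) ⊔ Ideal.span {aa ^ (m + 1)} := by
      rw [powl_append, sp_append, sp_cons, sp_nil, sup_bot_eq] at hx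
      have he : x * ((l' ++ [(aa, m)]).map fun p => p.1 ^ p.2).prod
          = x * (l'.map fun p => p.1 ^ p.2).prod * aa ^ m := by
        simp [mul_assoc]
      rw [he] at hx
      exact (by rwa [sup_assoc, sup_comm (Ideal.span {aa ^ (m+1)}), ← sup_assoc] at hx)
    obtain ⟨u, hu⟩ := mem_sup_span_singleton.mp hx'
    have hfac : x * (l'.map fun p => p.1 ^ p.2).prod * aa ^ m - u * aa ^ (m + 1)
        = aa ^ m * (x * (l'.map fun p => p.1 ^ p.2).prod - u * aa) := by ring
    rw [hfac] at hu
    have h1 := nzd_pow hNZD m _ hu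
    have h2 : x * (l'.map fun p => p.1 ^ p.2).prod ∈ sp (powl l') ⊔ sp (aa :: bs) := by
      rw [sp_cons]
      have he : x * (l'.map fun p => p.1 ^ p.2).prod
          = (x * (l'.map fun p => p.1 ^ p.2).prod - u * aa) + u * aa := by ring
      rw [he]
      refine Ideal.add_mem _ ?_ ?_
      · have hle : sp (powl l') ⊔ sp bs ≤ sp (powl l') ⊔ (Ideal.span {aa} ⊔ sp bs) :=
          sup_le_sup_left le_sup_right _
        exact hle h1
      · exact Submodule.mem_sup_right (Submodule.mem_sup_left
          (Ideal.mem_span_singleton'.mpr ⟨u, rfl⟩))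
    have hfin := IH (aa :: bs) x hreg' h2
    rw [sp_cons] at hfin
    rw [List.map_append, sp_append]
    simpa [sp_cons, sup_assoc] using hfin

/-- Bridge: the `Fin`-indexed regularity hypothesis gives `RegMod`. -/
lemma bridge : ∀ (n : ℕ) (a : Fin n → A) (K : Ideal A),
    (∀ i : Fin n, ∀ t : A, a i * t ∈ K ⊔ Ideal.span (a '' {j | j < i}) →
      t ∈ K ⊔ Ideal.span (a '' {j | j < i})) →
    RegMod K (List.ofFn a) := by
  intro n
  induction n with
  | zero => intro a K _; simp [List.ofFn_zero]
  | succ n ih =>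
    intro a K h
    rw [List.ofFn_succ]
    constructor
    · intro t ht
      have h0 := h 0 t
      have hempty : (a '' {j | j < (0 : Fin (n + 1))}) = ∅ := by
        ext y
        simp only [Set.mem_image, Set.mem_setOf_eq, Set.mem_empty_iff_false, iff_false]
        rintro ⟨j, hj, -⟩
        exact absurd hj (Fin.not_lt_zero j)
      rw [hempty, Ideal.span_empty, sup_bot_eq] at h0
      exact h0 ht
    · apply ih (a ∘ Fin.succ) (K ⊔ Ideal.span {a 0})
      intro i t
      have hset : a '' {j | j < i.succ} = insert (a 0) ((a ∘ Fin.succ) '' {j | j < i}) := by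
        ext y
        constructor
        · rintro ⟨j, hj, rfl⟩
          rcases Fin.eq_zero_or_eq_succ j with h0 | ⟨j', rfl⟩
          · subst h0; exact Set.mem_insert _ _
          · refine Set.mem_insert_of_mem _ ⟨j', ?_, rfl⟩
            simpa [Fin.succ_lt_succ_iff] using hj
        · rintro (rfl | ⟨j', hj', rfl⟩)
          · exact ⟨0, Fin.succ_pos i, rfl⟩
          · exact ⟨j'.succ, by simpa [Fin.succ_lt_succ_iff] using hj', rfl⟩
      have heq : K ⊔ Ideal.span {a 0} ⊔ Ideal.span ((a ∘ Fin.succ) '' {j | j < i})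
          = K ⊔ Ideal.span (a '' {j | j < i.succ}) := by
        rw [hset, Ideal.span_insert, sup_assoc]
      rw [heq]
      exact h i.succ t

end Aux

/-- If `(a₁,…,aₙ)` is an `A`-regular sequence and
`x·a₁^{e₁}⋯aₙ^{eₙ} ∈ ⟨a₁^{e₁+1},…,aₙ^{eₙ+1}⟩`, then `x ∈ ⟨a₁,…,aₙ⟩`. -/
theorem stmt16 {A : Type*} [CommRing A] {n : ℕ} (a : Fin n → A)
    (hreg : ∀ i : Fin n, ∀ x : A,
      a i * x ∈ Ideal.span (a '' {j | j < i}) → x ∈ Ideal.span (a '' {j | j < i}))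
    (e : Fin n → ℕ) (x : A)
    (hx : x * ∏ i, a i ^ e i ∈ Ideal.span (Set.range fun i => a i ^ (e i + 1))) :
    x ∈ Ideal.span (Set.range a) := by
  set l : List (A × ℕ) := List.ofFn (fun i => (a i, e i)) with hl
  have hmapfst : l.map Prod.fst = List.ofFn a := by
    rw [hl, List.map_ofFn]
    rfl
  have hr : RegMod ⊥ (l.map Prod.fst ++ []) := by
    rw [hmapfst, List.append_nil]
    apply bridge n a ⊥
    intro i t
    simp only [bot_sup_eq]
    exact hreg i t
  have hx' : x * (l.map fun p => p.1 ^ p.2).prod ∈ sp (powl l) ⊔ sp [] := by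
    rw [sp_nil, sup_bot_eq]
    have h1 : (l.map fun p => p.1 ^ p.2) = List.ofFn (fun i => a i ^ e i) := by
      rw [hl, List.map_ofFn]
      rfl
    have h3 : sp (powl l) = Ideal.span (Set.range fun i => a i ^ (e i + 1)) := by
      unfold sp powl
      congr 1
      ext y
      simp [hl, List.map_ofFn, List.mem_ofFn, Function.comp, eq_comm]
    rw [h1, List.prod_ofFn, h3]
    exact hx
  have hfin := main_list l [] x hr hx'
  rw [sp_nil, sup_bot_eq, hmapfst] at hfin
  have h4 : sp (List.ofFn a) = Ideal.span (Set.range a) := by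
    unfold sp
    congr 1
    ext y
    simp [List.mem_ofFn, eq_comm]
  rwa [h4] at hfin
end

section
/- (Hilbert–Burch, direct part) Let A be a commutative ring and A ∈ M_{n,n-1}(A) a matrix with (n-1)×(n-1) signed maximal minors Δ₁, …, Δₙ (so that Δ·A = 0 where Δ = [Δ₁ ⋯ Δₙ]). If the sequence (Δ₁,…,Δₙ) generates an ideal of depth ≥ 2 — concretely, if the Δᵢ generate a faithful ideal and every family (v₁,…,vₙ) proportional to (Δ₁,…,Δₙ) is a multiple of it — then the complex 0 → A^{n-1} → Aⁿ → A given by the matrix A followed by the row Δ is exact. -/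
/-- Hilbert–Burch, direct part: let `M ∈ M_{(n+1)×n}(R)` with signed maximal minors
`Δᵢ = (-1)^i det(M minus row i)`. If the `Δᵢ` generate a faithful ideal and every family
proportional to `(Δ₀,…,Δₙ)` is a multiple of it (depth ≥ 2), then the complex
`0 → Rⁿ → R^{n+1} → R` given by `M` and the row `Δ` is exact. -/
theorem stmt19 {R : Type*} [CommRing R] {n : ℕ} (M : Matrix (Fin (n + 1)) (Fin n) R)
    (Δ : Fin (n + 1) → R)
    (hΔ : ∀ i, Δ i = (-1) ^ (i : ℕ) * (M.submatrix i.succAbove id).det)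
    (hfaith : ∀ x : R, (∀ i, Δ i * x = 0) → x = 0)
    (hprop : ∀ v : Fin (n + 1) → R, (∀ i j, Δ i * v j = Δ j * v i) →
      ∃ w, ∀ i, v i = Δ i * w) :
    (∀ v : Fin n → R, M.mulVec v = 0 → v = 0) ∧
    (∀ y : Fin (n + 1) → R, (∑ i, Δ i * y i) = 0 ↔ ∃ v : Fin n → R, M.mulVec v = y) := by
  have hone : ∀ m : ℕ, ((-1 : R)) ^ m * (-1) ^ m = 1 := by
    intro m
    rw [← pow_add, ← two_mul, pow_mul, neg_one_sq, one_pow]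
  have hdet : ∀ i : Fin (n + 1), (M.submatrix i.succAbove id).det = (-1) ^ (i : ℕ) * Δ i := by
    intro i
    rw [hΔ i, ← mul_assoc, hone, one_mul]
  -- injectivity of M
  have inj : ∀ v : Fin n → R, M.mulVec v = 0 → v = 0 := by
    intro v hv
    funext j
    apply hfaith
    intro i
    have hBv : (M.submatrix i.succAbove id).mulVec v = 0 := by
      funext a
      simpa [Matrix.mulVec, dotProduct] using congrFun hv (i.succAbove a)
    have h2 : (M.submatrix i.succAbove id).det • v = 0 := by
      calc (M.submatrix i.succAbove id).det • v
          = ((M.submatrix i.succAbove id).adjugate * (M.submatrix i.succAbove id)).mulVec v := by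
            rw [Matrix.adjugate_mul, Matrix.smul_mulVec, Matrix.one_mulVec]
        _ = (M.submatrix i.succAbove id).adjugate.mulVec
              ((M.submatrix i.succAbove id).mulVec v) := (Matrix.mulVec_mulVec _ _ _).symm
        _ = 0 := by rw [hBv]; simp [Matrix.mulVec_zero]
    have h3 := congrFun h2 j
    simp only [Pi.smul_apply, smul_eq_mul, Pi.zero_apply] at h3
    calc Δ i * v j = (-1) ^ (i : ℕ) * ((M.submatrix i.succAbove id).det * v j) := by
          rw [hΔ i]; ring
      _ = 0 := by rw [h3, mul_zero]
  -- determinant of M with an extra column y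
  have detN : ∀ y : Fin (n + 1) → R,
      (Matrix.of (fun i => Fin.snoc (M i) (y i)) : Matrix (Fin (n + 1)) (Fin (n + 1)) R).det
        = (-1) ^ n * ∑ i, Δ i * y i := by
    intro y
    rw [Matrix.det_succ_column _ (Fin.last n), Finset.mul_sum]
    refine Finset.sum_congr rfl fun i _ => ?_
    have hsub : (Matrix.of (fun i => Fin.snoc (M i) (y i)) :
        Matrix (Fin (n + 1)) (Fin (n + 1)) R).submatrix i.succAbove (Fin.last n).succAbove
        = M.submatrix i.succAbove id := by
      funext a b
      simp [Fin.succAbove_last]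
    rw [hsub, hdet i]
    simp only [Matrix.of_apply, Fin.snoc_last, Fin.val_last]
    calc (-1 : R) ^ ((i : ℕ) + n) * y i * ((-1) ^ (i : ℕ) * Δ i)
        = ((-1 : R) ^ (i : ℕ) * (-1) ^ (i : ℕ)) * ((-1) ^ n * (Δ i * y i)) := by
          rw [pow_add]; ring
      _ = (-1) ^ n * (Δ i * y i) := by rw [hone, one_mul]
  -- the composite is zero: Δ · M = 0 columnwise
  have hcol : ∀ j, ∑ i, Δ i * M i j = 0 := by
    intro j
    have h := detN (fun i => M i j)
    have hz : (Matrix.of (fun i => Fin.snoc (M i) (M i j)) :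
        Matrix (Fin (n + 1)) (Fin (n + 1)) R).det = 0 := by
      apply Matrix.det_zero_of_column_eq (i := Fin.castSucc j) (j := Fin.last n)
      · exact (Fin.castSucc_lt_last j).ne
      · intro k; simp
    have h2 : ((-1 : R)) ^ n * ∑ i, Δ i * M i j = 0 := by rw [← h, hz]
    calc ∑ i, Δ i * M i j
        = ((-1 : R)) ^ n * (((-1 : R)) ^ n * ∑ i, Δ i * M i j) := by
          rw [← mul_assoc, hone, one_mul]
      _ = 0 := by rw [h2, mul_zero]
  refine ⟨inj, fun y => ⟨?_, ?_⟩⟩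
  · -- forward: ∑ Δᵢ yᵢ = 0 → y ∈ image of M
    intro hy
    set N : Matrix (Fin (n + 1)) (Fin (n + 1)) R :=
      Matrix.of (fun i => Fin.snoc (M i) (y i)) with hN
    have hdN : N.det = 0 := by rw [hN, detN, hy, mul_zero]
    have hker : ∀ k i, ∑ j, N i j * N.adjugate j k = 0 := by
      intro k i
      have h := congrFun (congrFun (Matrix.mul_adjugate N) i) k
      rw [hdN] at h
      simpa [Matrix.mul_apply] using h
    have hadjlast : ∀ k, N.adjugate (Fin.last n) k = (-1) ^ n * Δ k := by
      intro k
      rw [Matrix.adjugate_apply, Matrix.det_succ_row _ k]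
      rw [Finset.sum_eq_single (Fin.last n)]
      · have hsub : ((N.updateRow k (Pi.single (Fin.last n) 1)).submatrix
            k.succAbove (Fin.last n).succAbove) = M.submatrix k.succAbove id := by
          funext a b
          simp [Fin.succAbove_last, Matrix.updateRow_ne (Fin.succAbove_ne k a), hN]
        rw [hsub, hdet k]
        simp only [Matrix.updateRow_self, Pi.single_eq_same, Fin.val_last]
        calc (-1 : R) ^ ((k : ℕ) + n) * 1 * ((-1) ^ (k : ℕ) * Δ k)
            = ((-1 : R) ^ (k : ℕ) * (-1) ^ (k : ℕ)) * ((-1) ^ n * Δ k) := by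
              rw [pow_add]; ring
          _ = (-1) ^ n * Δ k := by rw [hone, one_mul]
      · intro b _ hb
        simp [Matrix.updateRow_self, Pi.single_eq_of_ne hb]
      · intro h; exact absurd (Finset.mem_univ _) h
    set u : Fin (n + 1) → Fin n → R :=
      fun k j => (-1) ^ (n + 1) * N.adjugate (Fin.castSucc j) k with hu
    have hNc : ∀ i j, N i (Fin.castSucc j) = M i j := fun i j => by simp [hN]
    have hNl : ∀ i, N i (Fin.last n) = y i := fun i => by simp [hN]
    have hMu : ∀ k i, (M.mulVec (u k)) i = Δ k * y i := by
      intro k i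
      have h1 := hker k i
      rw [Fin.sum_univ_castSucc] at h1
      simp only [hNc, hNl, hadjlast] at h1
      have hS := eq_neg_of_add_eq_zero_left h1
      have h2 : (M.mulVec (u k)) i
          = (-1 : R) ^ (n + 1) * ∑ j, M i j * N.adjugate (Fin.castSucc j) k := by
        rw [Finset.mul_sum]
        simp only [Matrix.mulVec, dotProduct, hu]
        exact Finset.sum_congr rfl fun j _ => by ring
      rw [h2, hS]
      have := hone n
      linear_combination (y i * Δ k) * this
    have hpropk : ∀ k k' j, Δ k * u k' j = Δ k' * u k j := by
      intro k k' j
      have h0 : M.mulVec (fun j => Δ k * u k' j - Δ k' * u k j) = 0 := by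
        funext i
        have e1 := hMu k' i
        have e2 := hMu k i
        simp only [Matrix.mulVec, dotProduct] at e1 e2 ⊢
        calc ∑ j, M i j * (Δ k * u k' j - Δ k' * u k j)
            = Δ k * ∑ j, M i j * u k' j - Δ k' * ∑ j, M i j * u k j := by
              rw [Finset.mul_sum, Finset.mul_sum, ← Finset.sum_sub_distrib]
              exact Finset.sum_congr rfl fun j _ => by ring
          _ = 0 := by rw [e1, e2]; ring
      have h1 := congrFun (inj _ h0) j
      simp only [Pi.zero_apply] at h1
      exact sub_eq_zero.mp h1
    choose w hw using fun j => hprop (fun k => u k j) (fun k k' => hpropk k k' j)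
    refine ⟨w, ?_⟩
    funext i
    have key : ∀ k, Δ k * ((M.mulVec w) i - y i) = 0 := by
      intro k
      have e := hMu k i
      simp only [Matrix.mulVec, dotProduct] at e ⊢
      rw [mul_sub, Finset.mul_sum]
      rw [show (∑ j, Δ k * (M i j * w j)) = ∑ j, M i j * u k j from
        Finset.sum_congr rfl fun j _ => by rw [hw j k]; ring]
      rw [e]; ring
    exact sub_eq_zero.mp (hfaith _ key)
  · -- backward: image of M is killed by Δ
    rintro ⟨v, rfl⟩
    simp only [Matrix.mulVec, dotProduct]
    calc ∑ i, Δ i * ∑ j, M i j * v j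
        = ∑ i, ∑ j, (Δ i * M i j) * v j := by
          refine Finset.sum_congr rfl fun i _ => ?_
          rw [Finset.mul_sum]
          exact Finset.sum_congr rfl fun j _ => by ring
      _ = ∑ j, ∑ i, (Δ i * M i j) * v j := Finset.sum_comm
      _ = ∑ j, (∑ i, Δ i * M i j) * v j := by
          refine Finset.sum_congr rfl fun j _ => (Finset.sum_mul _ _ _).symm
      _ = 0 := by simp [hcol]
end
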